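/- arXiv:math/0501154 — 6 statements merged into one kernel-verified Lean document; each statement's English description precedes it below -/
import Mathlib

section
/- Let V be an isometry on a Hilbert space H, T a power bounded operator on a Hilbert space K, and X a bounded operator from H to K. If the commutator equation X = TZ - ZV has a bounded solution Z with Z(I - VV*) = 0, then sup over n of the norm of the partial sums ∑_{j=0}^{n} T^j X V*^{j+1} is finite. -/
open ContinuousLinearMap

/-- if `V` is an isometry, `T` is power bounded and the commutator equation
`X = TZ - ZV` has a bounded solution `Z` with `Z (I - V V*) = 0`, then the partial sums
`∑_{j=0}^{n} T^j X V*^(j+1)` are uniformly bounded in norm. -/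
theorem stmt1 {K H : Type*}
    [NormedAddCommGroup K] [InnerProductSpace ℂ K] [CompleteSpace K]
    [NormedAddCommGroup H] [InnerProductSpace ℂ H] [CompleteSpace H]
    (V : H →L[ℂ] H) (hV : adjoint V ∘L V = 1)
    (T : K →L[ℂ] K) (hT : ∃ M : ℝ, ∀ n : ℕ, ‖T ^ n‖ ≤ M)
    (X Z : H →L[ℂ] K)
    (hZ : X = T ∘L Z - Z ∘L V)
    (hZ' : Z ∘L (1 - V ∘L adjoint V) = 0) :
    ∃ M : ℝ, ∀ n : ℕ,
      ‖∑ j ∈ Finset.range (n + 1), (T ^ j) ∘L X ∘L ((adjoint V) ^ (j + 1))‖ ≤ M := by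
  obtain ⟨M, hM⟩ := hT
  -- Z ∘ V ∘ V* = Z
  have hZVV : Z ∘L (V ∘L adjoint V) = Z := by
    have h := hZ'
    rw [ContinuousLinearMap.comp_sub, sub_eq_zero] at h
    simpa [ContinuousLinearMap.one_def] using h.symm
  -- V is norm-preserving, hence ‖V‖ ≤ 1 and ‖V*‖ ≤ 1
  have hVx : ∀ x : H, ‖V x‖ = ‖x‖ :=
    (ContinuousLinearMap.norm_map_iff_adjoint_comp_self V).mpr hV
  have hVnorm : ‖V‖ ≤ 1 :=
    ContinuousLinearMap.opNorm_le_bound _ zero_le_one fun x => by simp [hVx x]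
  have hVadj : ‖adjoint V‖ ≤ 1 := by
    rw [LinearIsometryEquiv.norm_map (adjoint (𝕜 := ℂ) (E := H) (F := H)) V]
    exact hVnorm
  -- telescoping identity for each term
  have step : ∀ j : ℕ, (T ^ j) ∘L X ∘L ((adjoint V) ^ (j + 1))
      = (T ^ (j + 1)) ∘L Z ∘L ((adjoint V) ^ (j + 1)) - (T ^ j) ∘L Z ∘L ((adjoint V) ^ j) := by
    intro j
    ext x
    simp only [hZ, ContinuousLinearMap.coe_comp', Function.comp_apply,
      ContinuousLinearMap.coe_sub', Pi.sub_apply, ContinuousLinearMap.sub_apply]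
    set y := ((adjoint V) ^ (j + 1)) x with hy
    have e1 : (T ^ (j + 1)) (Z y) = (T ^ j) (T (Z y)) := by
      rw [pow_succ]
      rfl
    have e2 : y = (adjoint V) (((adjoint V) ^ j) x) := by
      rw [hy, pow_succ']
      rfl
    have e3 : Z (V y) = Z (((adjoint V) ^ j) x) := by
      rw [e2]
      have := congrArg (fun f => f (((adjoint V) ^ j) x)) hZVV
      simpa using this
    rw [e1, e3]
    simp [map_sub]
  -- sum telescopes
  refine ⟨M * ‖Z‖ * 1 + 1 * ‖Z‖ * 1, fun n => ?_⟩
  have key : ∑ j ∈ Finset.range (n + 1), (T ^ j) ∘L X ∘L ((adjoint V) ^ (j + 1))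
      = (T ^ (n + 1)) ∘L Z ∘L ((adjoint V) ^ (n + 1)) - (T ^ 0) ∘L Z ∘L ((adjoint V) ^ 0) := by
    rw [← Finset.sum_range_sub (fun j => (T ^ j) ∘L Z ∘L ((adjoint V) ^ j)) (n + 1)]
    exact Finset.sum_congr rfl fun j _ => step j
  rw [key]
  have hpow : ∀ m : ℕ, ‖(adjoint V) ^ m‖ ≤ 1 := by
    intro m
    induction m with
    | zero => rw [pow_zero]; exact ContinuousLinearMap.norm_id_le (E := H)
    | succ k ih =>
      rw [pow_succ]
      refine le_trans (norm_mul_le _ _) ?_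
      calc ‖(adjoint V) ^ k‖ * ‖adjoint V‖ ≤ 1 * 1 :=
            mul_le_mul ih hVadj (norm_nonneg _) zero_le_one
        _ = 1 := mul_one 1
  have hb1 : ‖(T ^ (n + 1)) ∘L Z ∘L ((adjoint V) ^ (n + 1))‖ ≤ M * ‖Z‖ * 1 := by
    refine le_trans (opNorm_comp_le _ _) ?_
    refine le_trans (mul_le_mul (hM _) (opNorm_comp_le Z _) (norm_nonneg _)
      (le_trans (norm_nonneg _) (hM 0))) ?_
    rw [mul_assoc]
    gcongr
    · exact le_trans (norm_nonneg _) (hM 0)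
    · exact hpow _
  have hb2 : ‖(T ^ 0) ∘L Z ∘L ((adjoint V) ^ 0)‖ ≤ 1 * ‖Z‖ * 1 := by
    have : ‖(T ^ 0) ∘L Z ∘L ((adjoint V) ^ 0)‖ = ‖Z‖ := by simp [pow_zero, ContinuousLinearMap.one_def]
    rw [this, one_mul, mul_one]
  exact le_trans (norm_sub_le _ _) (add_le_add hb1 hb2)
end

section
/- Let U be a unitary operator on H, T a power bounded operator on K, and X a bounded operator from H to K. Then the block matrix R(X) = [[T, X],[0, U]] on K ⊕ H is similar to R(0) = T ⊕ U if and only if R(X) is power bounded. -/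
set_option linter.unusedSectionVars false
set_option linter.unreachableTactic false
set_option linter.unusedTactic false


open ContinuousLinearMap

variable {K H : Type*}
  [NormedAddCommGroup K] [InnerProductSpace ℂ K] [CompleteSpace K]
  [NormedAddCommGroup H] [InnerProductSpace ℂ H] [CompleteSpace H]

/-- The block operator matrix `[[T, X], [0, V]]` on the Hilbert space direct sum `K ⊕₂ H`. -/
noncomputable def blockOp (T : K →L[ℂ] K) (X : H →L[ℂ] K) (V : H →L[ℂ] H) :
    WithLp 2 (K × H) →L[ℂ] WithLp 2 (K × H) :=
  ((WithLp.prodContinuousLinearEquiv 2 ℂ K H).symm : K × H →L[ℂ] WithLp 2 (K × H)) ∘L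
    ((T ∘L fst ℂ K H + X ∘L snd ℂ K H).prod (V ∘L snd ℂ K H)) ∘L
    ((WithLp.prodContinuousLinearEquiv 2 ℂ K H) : WithLp 2 (K × H) →L[ℂ] K × H)

lemma blockOp_apply (T : K →L[ℂ] K) (X : H →L[ℂ] K) (V : H →L[ℂ] H)
    (v : WithLp 2 (K × H)) :
    blockOp T X V v = (WithLp.prodContinuousLinearEquiv 2 ℂ K H).symm
      (T ((WithLp.prodContinuousLinearEquiv 2 ℂ K H) v).1 +
        X ((WithLp.prodContinuousLinearEquiv 2 ℂ K H) v).2,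
       V ((WithLp.prodContinuousLinearEquiv 2 ℂ K H) v).2) := rfl

lemma blockOp_comp (T T' : K →L[ℂ] K) (X X' : H →L[ℂ] K) (V V' : H →L[ℂ] H) :
    blockOp T X V ∘L blockOp T' X' V' =
      blockOp (T ∘L T') (T ∘L X' + X ∘L V') (V ∘L V') := by
  ext v
  simp [blockOp_apply, add_assoc]

lemma blockOp_one : (blockOp (1 : K →L[ℂ] K) 0 (1 : H →L[ℂ] H)) = 1 := by
  ext v
  simp [blockOp_apply, WithLp.equiv]
  rfl

open scoped InnerProductSpace

noncomputable def Sseq (T : K →L[ℂ] K) (X : H →L[ℂ] K) (V : H →L[ℂ] H) : ℕ → (H →L[ℂ] K)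
  | 0 => 0
  | n + 1 => T ∘L Sseq T X V n + X ∘L V ^ n

lemma blockOp_pow (T : K →L[ℂ] K) (X : H →L[ℂ] K) (V : H →L[ℂ] H) (n : ℕ) :
    blockOp T X V ^ n = blockOp (T ^ n) (Sseq T X V n) (V ^ n) := by
  induction n with
  | zero => simpa [Sseq] using blockOp_one.symm
  | succ n ih =>
    rw [pow_succ', ih, ContinuousLinearMap.mul_def, blockOp_comp]
    rw [pow_succ' T, pow_succ' V]
    rfl

lemma norm_corner_le (T : K →L[ℂ] K) (X : H →L[ℂ] K) (V : H →L[ℂ] H) :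
    ‖X‖ ≤ ‖blockOp T X V‖ := by
  refine ContinuousLinearMap.opNorm_le_bound X (norm_nonneg _) fun h => ?_
  have h1 : blockOp T X V ((WithLp.equiv 2 (K × H)).symm (0, h)) =
      (WithLp.equiv 2 (K × H)).symm (X h, V h) := by
    simp [blockOp_apply]
  have h2 := (blockOp T X V).le_opNorm ((WithLp.equiv 2 (K × H)).symm (0, h))
  rw [show ‖(WithLp.equiv 2 (K × H)).symm (0, h)‖ = ‖h‖ from WithLp.norm_toLp_snd 2 K H h] at h2
  rw [h1] at h2
  have h3 := WithLp.prod_norm_sq_eq_of_L2 ((WithLp.equiv 2 (K × H)).symm (X h, V h))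
  replace h3 : ‖(WithLp.equiv 2 (K × H)).symm (X h, V h)‖ ^ 2 = ‖X h‖ ^ 2 + ‖V h‖ ^ 2 := h3
  nlinarith [norm_nonneg ((WithLp.equiv 2 (K × H)).symm (X h, V h)), norm_nonneg (X h),
    norm_nonneg (V h), sq_nonneg (‖V h‖)]

lemma norm_blockOp_diag_le (T : K →L[ℂ] K) (V : H →L[ℂ] H) :
    ‖blockOp T 0 V‖ ≤ max ‖T‖ ‖V‖ := by
  refine ContinuousLinearMap.opNorm_le_bound _ (le_max_iff.2 (Or.inl (norm_nonneg _)))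
    fun v => ?_
  have h1 : blockOp T 0 V v = (WithLp.equiv 2 (K × H)).symm
      (T ((WithLp.prodContinuousLinearEquiv 2 ℂ K H) v).1,
       V ((WithLp.prodContinuousLinearEquiv 2 ℂ K H) v).2) := by
    simp [blockOp_apply]
  rw [h1]
  set a := ((WithLp.prodContinuousLinearEquiv 2 ℂ K H) v).1 with ha
  set b := ((WithLp.prodContinuousLinearEquiv 2 ℂ K H) v).2 with hb
  have h3 := WithLp.prod_norm_sq_eq_of_L2 ((WithLp.equiv 2 (K × H)).symm (T a, V b))
  replace h3 : ‖(WithLp.equiv 2 (K × H)).symm (T a, V b)‖ ^ 2 = ‖T a‖ ^ 2 + ‖V b‖ ^ 2 := h3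
  have h4 := WithLp.prod_norm_sq_eq_of_L2 v
  have hva : v.fst = a := rfl
  have hvb : v.snd = b := rfl
  rw [hva, hvb] at h4
  have hTa : ‖T a‖ ≤ max ‖T‖ ‖V‖ * ‖a‖ :=
    (T.le_opNorm a).trans (by gcongr; exact le_max_left _ _)
  have hVb : ‖V b‖ ≤ max ‖T‖ ‖V‖ * ‖b‖ :=
    (V.le_opNorm b).trans (by gcongr; exact le_max_right _ _)
  have hm : (0:ℝ) ≤ max ‖T‖ ‖V‖ := le_max_iff.2 (Or.inl (norm_nonneg _))
  have hsq : ‖(WithLp.equiv 2 (K × H)).symm (T a, V b)‖ ^ 2 ≤ (max ‖T‖ ‖V‖ * ‖v‖) ^ 2 := by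
    rw [h3, mul_pow, h4, mul_add]
    have p1 := mul_le_mul hTa hTa (norm_nonneg _) (mul_nonneg hm (norm_nonneg a))
    have p2 := mul_le_mul hVb hVb (norm_nonneg _) (mul_nonneg hm (norm_nonneg b))
    nlinarith [p1, p2]
  exact le_of_pow_le_pow_left₀ two_ne_zero (mul_nonneg hm (norm_nonneg v)) hsq

lemma norm_isom_apply (A : H →L[ℂ] H) (hA : adjoint A ∘L A = 1) (x : H) : ‖A x‖ = ‖x‖ := by
  have hAx : adjoint A (A x) = x := by
    rw [← ContinuousLinearMap.comp_apply, hA, ContinuousLinearMap.one_apply]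
  have h1 : ⟪A x, A x⟫_ℂ = ⟪x, x⟫_ℂ := by
    rw [← ContinuousLinearMap.adjoint_inner_right, hAx]
  rw [inner_self_eq_norm_sq_to_K, inner_self_eq_norm_sq_to_K] at h1
  have h2 : (‖A x‖ : ℝ) ^ 2 = ‖x‖ ^ 2 := by exact_mod_cast h1
  nlinarith [norm_nonneg (A x), norm_nonneg x]

lemma norm_isom_pow_apply (A : H →L[ℂ] H) (hA : adjoint A ∘L A = 1) (n : ℕ) (x : H) :
    ‖(A ^ n) x‖ = ‖x‖ := by
  induction n with
  | zero => simp
  | succ n ih =>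
    rw [pow_succ', ContinuousLinearMap.mul_apply, norm_isom_apply A hA, ih]

lemma norm_isom_pow_le (A : H →L[ℂ] H) (hA : adjoint A ∘L A = 1) (n : ℕ) :
    ‖A ^ n‖ ≤ 1 := by
  refine ContinuousLinearMap.opNorm_le_bound _ zero_le_one fun x => ?_
  rw [norm_isom_pow_apply A hA n x, one_mul]

lemma pow_mul_adjoint_pow (U : H →L[ℂ] H) (hU' : U ∘L adjoint U = 1) (n : ℕ) :
    U ^ n * (adjoint U) ^ n = 1 := by
  induction n with
  | zero => simp
  | succ n ih =>
    have h : U * adjoint U = 1 := hU'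
    rw [pow_succ' U, pow_succ, mul_assoc, ← mul_assoc (U ^ n), ih, one_mul, h]

noncomputable def Cseq (U : H →L[ℂ] H) (T : K →L[ℂ] K) (X : H →L[ℂ] K) (n : ℕ) : H →L[ℂ] K :=
  Sseq T X U n ∘L (adjoint U) ^ n

lemma Cseq_zero (U : H →L[ℂ] H) (T : K →L[ℂ] K) (X : H →L[ℂ] K) : Cseq U T X 0 = 0 := by
  simp [Cseq, Sseq]

lemma Cseq_succ (U : H →L[ℂ] H) (hU' : U ∘L adjoint U = 1) (T : K →L[ℂ] K) (X : H →L[ℂ] K)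
    (n : ℕ) :
    Cseq U T X (n + 1) = T ∘L Cseq U T X n ∘L adjoint U + X ∘L adjoint U := by
  have hUV : (U ^ n) ∘L (((adjoint U) ^ n) ∘L adjoint U) = adjoint U := by
    rw [← ContinuousLinearMap.comp_assoc (U ^ n) ((adjoint U) ^ n) (adjoint U)]
    have h2 : (U ^ n) ∘L (adjoint U) ^ n = 1 := pow_mul_adjoint_pow U hU' n
    rw [h2]
    simp [ContinuousLinearMap.one_def]
  have h1 : Cseq U T X (n + 1) =
      (T ∘L Sseq T X U n + X ∘L U ^ n) ∘L (((adjoint U) ^ n) ∘L adjoint U) := by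
    rw [Cseq, pow_succ]
    rfl
  rw [h1, ContinuousLinearMap.add_comp, ContinuousLinearMap.comp_assoc X, hUV,
    ContinuousLinearMap.comp_assoc T, ← ContinuousLinearMap.comp_assoc (Sseq T X U n), ← Cseq,
    ← ContinuousLinearMap.comp_assoc T]

lemma comp_sum' {ι : Type*} (s : Finset ι) (T : K →L[ℂ] K) (f : ι → (H →L[ℂ] K)) :
    T ∘L (∑ i ∈ s, f i) = ∑ i ∈ s, T ∘L f i := by
  ext h
  simp

noncomputable def Dseq (U : H →L[ℂ] H) (T : K →L[ℂ] K) (X : H →L[ℂ] K) (N : ℕ) :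
    H →L[ℂ] K :=
  ((N : ℂ) + 1)⁻¹ • ∑ n ∈ Finset.range (N + 1), Cseq U T X n

lemma Dseq_identity (U : H →L[ℂ] H) (hU' : U ∘L adjoint U = 1) (T : K →L[ℂ] K)
    (X : H →L[ℂ] K) (N : ℕ) :
    T ∘L Dseq U T X N ∘L adjoint U =
      Dseq U T X N + ((N : ℂ) + 1)⁻¹ • Cseq U T X (N + 1) - X ∘L adjoint U := by
  have hc : ((N : ℂ) + 1) ≠ 0 := Nat.cast_add_one_ne_zero N
  have h1 : ∀ n, T ∘L Cseq U T X n ∘L adjoint U = Cseq U T X (n + 1) - X ∘L adjoint U := by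
    intro n
    rw [Cseq_succ U hU' T X n]
    abel
  have hshift : ∑ n ∈ Finset.range (N + 1), Cseq U T X (n + 1) =
      (∑ n ∈ Finset.range (N + 1), Cseq U T X n) + Cseq U T X (N + 1) := by
    have ha := Finset.sum_range_succ' (fun n => Cseq U T X n) (N + 1)
    have hb := Finset.sum_range_succ (fun n => Cseq U T X n) (N + 1)
    rw [Cseq_zero, add_zero] at ha
    rw [ha] at hb
    exact hb
  have key : ∑ n ∈ Finset.range (N + 1), (T ∘L Cseq U T X n ∘L adjoint U) =
      (∑ n ∈ Finset.range (N + 1), Cseq U T X n) + Cseq U T X (N + 1)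
        - ((N : ℂ) + 1) • (X ∘L adjoint U) := by
    rw [Finset.sum_congr rfl (fun n _ => h1 n), Finset.sum_sub_distrib, hshift,
      Finset.sum_const, Finset.card_range]
    congr 1
    rw [← Nat.cast_smul_eq_nsmul ℂ]
    push_cast
    ring_nf
  have lhs : T ∘L Dseq U T X N ∘L adjoint U =
      ((N : ℂ) + 1)⁻¹ • ∑ n ∈ Finset.range (N + 1), (T ∘L Cseq U T X n ∘L adjoint U) := by
    rw [Dseq, ContinuousLinearMap.smul_comp, ContinuousLinearMap.comp_smul,
      ContinuousLinearMap.finset_sum_comp, comp_sum']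
  rw [lhs, key, smul_sub, smul_add, smul_smul, inv_mul_cancel₀ hc, one_smul, Dseq]

lemma Dseq_norm_le (U : H →L[ℂ] H) (T : K →L[ℂ] K) (X : H →L[ℂ] K) (M : ℝ)
    (hM : ∀ n, ‖Cseq U T X n‖ ≤ M) (N : ℕ) : ‖Dseq U T X N‖ ≤ M := by
  have h0 : (0 : ℝ) ≤ M := le_trans (norm_nonneg _) (hM 0)
  have hns : ‖Dseq U T X N‖ ≤
      ‖((N : ℂ) + 1)⁻¹‖ * ‖∑ n ∈ Finset.range (N + 1), Cseq U T X n‖ :=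
    ContinuousLinearMap.opNorm_smul_le _ _
  have h1 : ‖((N : ℂ) + 1)⁻¹‖ = ((N : ℝ) + 1)⁻¹ := by
    rw [norm_inv]
    congr 1
    have : ((N : ℂ) + 1) = ((N + 1 : ℕ) : ℂ) := by push_cast; ring
    rw [this, Complex.norm_natCast]
    push_cast
    ring
  have h2 : ‖∑ n ∈ Finset.range (N + 1), Cseq U T X n‖ ≤ ((N : ℝ) + 1) * M := by
    calc ‖∑ n ∈ Finset.range (N + 1), Cseq U T X n‖
        ≤ ∑ n ∈ Finset.range (N + 1), ‖Cseq U T X n‖ := norm_sum_le _ _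
      _ ≤ ∑ _n ∈ Finset.range (N + 1), M := Finset.sum_le_sum fun n _ => hM n
      _ = ((N : ℝ) + 1) * M := by
          rw [Finset.sum_const, Finset.card_range, nsmul_eq_mul]
          push_cast
          ring
  rw [h1] at hns
  have h3 : (0 : ℝ) < (N : ℝ) + 1 := by positivity
  calc ‖Dseq U T X N‖
      ≤ ((N : ℝ) + 1)⁻¹ * ‖∑ n ∈ Finset.range (N + 1), Cseq U T X n‖ := hns
    _ ≤ ((N : ℝ) + 1)⁻¹ * (((N : ℝ) + 1) * M) := by
        gcongr
    _ = M := by field_simp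

open Filter Topology

noncomputable def ulim (g : ℕ → ℂ) : ℂ :=
  lim (Filter.map g (Ultrafilter.of (Filter.atTop : Filter ℕ) : Filter ℕ))

lemma ulim_spec {g : ℕ → ℂ} {r : ℝ} (hg : ∀ n, ‖g n‖ ≤ r) :
    Filter.Tendsto g (Ultrafilter.of (Filter.atTop : Filter ℕ) : Filter ℕ) (𝓝 (ulim g)) := by
  have hmem : Metric.closedBall (0 : ℂ) r ∈ Ultrafilter.map g (Ultrafilter.of Filter.atTop) := by
    refine Filter.mem_map.2 (Filter.univ_mem' fun n => ?_)
    simpa [Metric.mem_closedBall, dist_eq_norm] using hg n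
  obtain ⟨a, -, ha⟩ := (isCompact_closedBall (0 : ℂ) r).ultrafilter_le_nhds'
    (Ultrafilter.map g (Ultrafilter.of Filter.atTop)) hmem
  rw [Ultrafilter.coe_map] at ha
  exact le_nhds_lim ⟨a, ha⟩

lemma ulim_norm_le {g : ℕ → ℂ} {r : ℝ} (hg : ∀ n, ‖g n‖ ≤ r) : ‖ulim g‖ ≤ r :=
  le_of_tendsto (ulim_spec hg).norm (Filter.Eventually.of_forall hg)

lemma ulim_unique {g : ℕ → ℂ} {r : ℝ} {a : ℂ} (hg : ∀ n, ‖g n‖ ≤ r)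
    (h : Filter.Tendsto g (Ultrafilter.of (Filter.atTop : Filter ℕ) : Filter ℕ) (𝓝 a)) :
    ulim g = a :=
  tendsto_nhds_unique (ulim_spec hg) h

lemma exists_Y (U : H →L[ℂ] H) (hU : adjoint U ∘L U = 1) (hU' : U ∘L adjoint U = 1)
    (T : K →L[ℂ] K) (X : H →L[ℂ] K) (M : ℝ)
    (hM : ∀ n, ‖Cseq U T X n‖ ≤ M) :
    ∃ Y : H →L[ℂ] K, Y ∘L U = X + T ∘L Y := by
  have hM0 : (0 : ℝ) ≤ M := le_trans (norm_nonneg _) (hM 0)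
  have hDb : ∀ N, ‖Dseq U T X N‖ ≤ M := Dseq_norm_le U T X M hM
  have hbound : ∀ (h : H) (k : K) (N : ℕ), ‖⟪Dseq U T X N h, k⟫_ℂ‖ ≤ M * ‖h‖ * ‖k‖ := by
    intro h k N
    calc ‖⟪Dseq U T X N h, k⟫_ℂ‖ ≤ ‖Dseq U T X N h‖ * ‖k‖ := norm_inner_le_norm _ _
      _ ≤ (M * ‖h‖) * ‖k‖ := by
          gcongr
          calc ‖Dseq U T X N h‖ ≤ ‖Dseq U T X N‖ * ‖h‖ := ContinuousLinearMap.le_opNorm _ _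
            _ ≤ M * ‖h‖ := by gcongr; exact hDb N
      _ = M * ‖h‖ * ‖k‖ := by ring
  set φ : H → K → ℂ := fun h k => ulim (fun N => ⟪Dseq U T X N h, k⟫_ℂ) with hφdef
  have hφ : ∀ h k, Filter.Tendsto (fun N => ⟪Dseq U T X N h, k⟫_ℂ)
      (Ultrafilter.of (Filter.atTop : Filter ℕ) : Filter ℕ) (𝓝 (φ h k)) :=
    fun h k => ulim_spec (fun N => hbound h k N)
  have hφnorm : ∀ h k, ‖φ h k‖ ≤ M * ‖h‖ * ‖k‖ :=
    fun h k => ulim_norm_le (fun N => hbound h k N)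
  have hYex : ∀ h : H, ∃ y : K, ‖y‖ ≤ M * ‖h‖ ∧ ∀ k, ⟪y, k⟫_ℂ = φ h k := by
    intro h
    have hadd : ∀ k₁ k₂, φ h (k₁ + k₂) = φ h k₁ + φ h k₂ := by
      intro k₁ k₂
      refine tendsto_nhds_unique (hφ h (k₁ + k₂)) ?_
      have := (hφ h k₁).add (hφ h k₂)
      simpa [inner_add_right] using this
    have hsmul : ∀ (c : ℂ) k, φ h (c • k) = c * φ h k := by
      intro c k
      refine tendsto_nhds_unique (hφ h (c • k)) ?_
      have := (hφ h k).const_mul c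
      simpa [inner_smul_right] using this
    set F : K →L[ℂ] ℂ := LinearMap.mkContinuous
      { toFun := fun k => φ h k
        map_add' := hadd
        map_smul' := fun c k => by simpa using hsmul c k } (M * ‖h‖)
      (fun k => by simpa [mul_assoc] using hφnorm h k) with hFdef
    have hFnorm : ‖F‖ ≤ M * ‖h‖ :=
      LinearMap.mkContinuous_norm_le _ (by positivity) _
    refine ⟨(InnerProductSpace.toDual ℂ K).symm F, ?_, fun k => ?_⟩
    · rw [LinearIsometryEquiv.norm_map]
      exact hFnorm
    · rw [InnerProductSpace.toDual_symm_apply]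
      rfl
  choose Yh hYnorm hYinner using hYex
  have hYadd : ∀ h₁ h₂, Yh (h₁ + h₂) = Yh h₁ + Yh h₂ := by
    intro h₁ h₂
    refine ext_inner_right ℂ fun k => ?_
    rw [hYinner, inner_add_left, hYinner, hYinner]
    refine tendsto_nhds_unique (hφ (h₁ + h₂) k) ?_
    have := (hφ h₁ k).add (hφ h₂ k)
    simpa [map_add, inner_add_left] using this
  have hYsmul : ∀ (c : ℂ) h, Yh (c • h) = c • Yh h := by
    intro c h
    refine ext_inner_right ℂ fun k => ?_
    rw [hYinner, inner_smul_left, hYinner]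
    refine tendsto_nhds_unique (hφ (c • h) k) ?_
    have := (hφ h k).const_mul ((starRingEnd ℂ) c)
    simpa [map_smul, inner_smul_left, mul_comm] using this
  set Y : H →L[ℂ] K := LinearMap.mkContinuous
    { toFun := Yh
      map_add' := hYadd
      map_smul' := fun c h => by simpa using hYsmul c h } M
    (fun h => hYnorm h) with hYdef
  have hYk : ∀ h k, ⟪Y h, k⟫_ℂ = φ h k := fun h k => hYinner h k
  have hYeq : (Y : H →L[ℂ] K) = X ∘L adjoint U + T ∘L (Y ∘L adjoint U) := by
    ext h
    refine ext_inner_right ℂ fun k => ?_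
    have main : φ h k = ⟪X (adjoint U h), k⟫_ℂ + φ (adjoint U h) (adjoint T k) := by
      have seq : ∀ N, ⟪Dseq U T X N (adjoint U h), adjoint T k⟫_ℂ
          = ⟪Dseq U T X N h, k⟫_ℂ
            + (starRingEnd ℂ) (((N : ℂ) + 1)⁻¹) * ⟪Cseq U T X (N + 1) h, k⟫_ℂ
            - ⟪X (adjoint U h), k⟫_ℂ := by
        intro N
        have hid := congrArg (fun A : H →L[ℂ] K => ⟪A h, k⟫_ℂ) (Dseq_identity U hU' T X N)
        simp only [ContinuousLinearMap.comp_apply, ContinuousLinearMap.add_apply,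
          ContinuousLinearMap.sub_apply, ContinuousLinearMap.coe_smul', Pi.smul_apply,
          inner_add_left, inner_sub_left, inner_smul_left] at hid
        rw [ContinuousLinearMap.adjoint_inner_right]
        exact hid
      have hnorminv : ∀ N : ℕ, ‖((N : ℂ) + 1)⁻¹‖ = ((N : ℝ) + 1)⁻¹ := by
        intro N
        rw [norm_inv]
        congr 1
        have : ((N : ℂ) + 1) = ((N + 1 : ℕ) : ℂ) := by push_cast; ring
        rw [this, Complex.norm_natCast]
        push_cast
        ring
      have hzero : Filter.Tendsto
          (fun N : ℕ => (starRingEnd ℂ) (((N : ℂ) + 1)⁻¹) * ⟪Cseq U T X (N + 1) h, k⟫_ℂ)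
          Filter.atTop (𝓝 0) := by
        apply squeeze_zero_norm (a := fun N : ℕ => (1 / ((N : ℝ) + 1)) * (M * ‖h‖ * ‖k‖))
        · intro N
          rw [norm_mul, RCLike.norm_conj, hnorminv N, one_div]
          gcongr
          calc ‖⟪Cseq U T X (N + 1) h, k⟫_ℂ‖ ≤ ‖Cseq U T X (N + 1) h‖ * ‖k‖ :=
                norm_inner_le_norm _ _
            _ ≤ (M * ‖h‖) * ‖k‖ := by
                gcongr
                calc ‖Cseq U T X (N + 1) h‖ ≤ ‖Cseq U T X (N + 1)‖ * ‖h‖ :=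
                      ContinuousLinearMap.le_opNorm _ _
                  _ ≤ M * ‖h‖ := by gcongr; exact hM (N + 1)
            _ = M * ‖h‖ * ‖k‖ := by ring
        · have := tendsto_one_div_add_atTop_nhds_zero_nat.mul_const (M * ‖h‖ * ‖k‖)
          simpa using this
      have hzero' : Filter.Tendsto
          (fun N : ℕ => (starRingEnd ℂ) (((N : ℂ) + 1)⁻¹) * ⟪Cseq U T X (N + 1) h, k⟫_ℂ)
          (Ultrafilter.of (Filter.atTop : Filter ℕ) : Filter ℕ) (𝓝 0) :=
        hzero.mono_left (Ultrafilter.of_le _)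
      have t2 : Filter.Tendsto (fun N => ⟪Dseq U T X N (adjoint U h), adjoint T k⟫_ℂ)
          (Ultrafilter.of (Filter.atTop : Filter ℕ) : Filter ℕ)
          (𝓝 (φ h k + 0 - ⟪X (adjoint U h), k⟫_ℂ)) := by
        have := ((hφ h k).add hzero').sub (tendsto_const_nhds
          (x := ⟪X (adjoint U h), k⟫_ℂ))
        exact Filter.Tendsto.congr (fun N => (seq N).symm) this
      have huniq := tendsto_nhds_unique (hφ (adjoint U h) (adjoint T k)) t2
      rw [huniq]
      ring
    have hlhs : ⟪Y h, k⟫_ℂ = φ h k := hYk h k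
    have hrhs : ⟪(X ∘L adjoint U + T ∘L (Y ∘L adjoint U)) h, k⟫_ℂ
        = ⟪X (adjoint U h), k⟫_ℂ + φ (adjoint U h) (adjoint T k) := by
      simp only [ContinuousLinearMap.add_apply, ContinuousLinearMap.comp_apply,
        inner_add_left]
      congr 1
      rw [← ContinuousLinearMap.adjoint_inner_right T, hYk]
    rw [hlhs, hrhs, main]
  refine ⟨Y, ?_⟩
  have hcomp := congrArg (fun A : H →L[ℂ] K => A ∘L U) hYeq
  simp only [ContinuousLinearMap.add_comp, ContinuousLinearMap.comp_assoc] at hcomp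
  rw [hU] at hcomp
  simpa [ContinuousLinearMap.one_def] using hcomp

lemma stmt3_forward (U : H →L[ℂ] H) (hU : adjoint U ∘L U = 1)
    (T : K →L[ℂ] K) (M : ℝ) (hTpow : ∀ n, ‖T ^ n‖ ≤ M) (X : H →L[ℂ] K)
    (L : WithLp 2 (K × H) ≃L[ℂ] WithLp 2 (K × H))
    (hL : (L.symm : WithLp 2 (K × H) →L[ℂ] WithLp 2 (K × H)) ∘L blockOp T X U ∘L
          (L : WithLp 2 (K × H) →L[ℂ] WithLp 2 (K × H)) = blockOp T 0 U) :
    ∃ M' : ℝ, ∀ n : ℕ, ‖(blockOp T X U) ^ n‖ ≤ M' := by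
  have hR : blockOp T X U =
      (L : WithLp 2 (K × H) →L[ℂ] WithLp 2 (K × H)) ∘L blockOp T 0 U ∘L
        (L.symm : WithLp 2 (K × H) →L[ℂ] WithLp 2 (K × H)) := by
    rw [← hL]
    ext v
    simp
  have hpow : ∀ n, blockOp T X U ^ n =
      (L : WithLp 2 (K × H) →L[ℂ] WithLp 2 (K × H)) ∘L (blockOp T 0 U ^ n) ∘L
        (L.symm : WithLp 2 (K × H) →L[ℂ] WithLp 2 (K × H)) := by
    intro n
    induction n with
    | zero =>
      ext v
      simp
    | succ n ih =>
      rw [pow_succ', ContinuousLinearMap.mul_def, ih, hR, pow_succ',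
        ContinuousLinearMap.mul_def]
      ext v
      simp
  have hS0 : ∀ n, Sseq T (0 : H →L[ℂ] K) U n = 0 := by
    intro n
    induction n with
    | zero => rfl
    | succ n ih => simp [Sseq, ih]
  have hdiag : ∀ n, ‖blockOp T 0 U ^ n‖ ≤ max M 1 := by
    intro n
    rw [blockOp_pow, hS0]
    refine (norm_blockOp_diag_le _ _).trans ?_
    exact max_le_max (hTpow n) (norm_isom_pow_le U hU n)
  refine ⟨‖(L : WithLp 2 (K × H) →L[ℂ] WithLp 2 (K × H))‖ * max M 1 *
    ‖(L.symm : WithLp 2 (K × H) →L[ℂ] WithLp 2 (K × H))‖, fun n => ?_⟩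
  rw [hpow n]
  calc ‖(L : WithLp 2 (K × H) →L[ℂ] WithLp 2 (K × H)) ∘L (blockOp T 0 U ^ n) ∘L
        (L.symm : WithLp 2 (K × H) →L[ℂ] WithLp 2 (K × H))‖
      ≤ ‖(L : WithLp 2 (K × H) →L[ℂ] WithLp 2 (K × H))‖ * ‖(blockOp T 0 U ^ n) ∘L
        (L.symm : WithLp 2 (K × H) →L[ℂ] WithLp 2 (K × H))‖ :=
        ContinuousLinearMap.opNorm_comp_le _ _
    _ ≤ ‖(L : WithLp 2 (K × H) →L[ℂ] WithLp 2 (K × H))‖ * (‖blockOp T 0 U ^ n‖ *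
        ‖(L.symm : WithLp 2 (K × H) →L[ℂ] WithLp 2 (K × H))‖) := by
        gcongr
        exact ContinuousLinearMap.opNorm_comp_le _ _
    _ ≤ ‖(L : WithLp 2 (K × H) →L[ℂ] WithLp 2 (K × H))‖ * (max M 1 *
        ‖(L.symm : WithLp 2 (K × H) →L[ℂ] WithLp 2 (K × H))‖) := by
        gcongr
        exact hdiag n
    _ = _ := by ring

lemma stmt3_reverse (U : H →L[ℂ] H) (hU : adjoint U ∘L U = 1) (hU' : U ∘L adjoint U = 1)
    (T : K →L[ℂ] K) (X : H →L[ℂ] K) (M : ℝ)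
    (hpb : ∀ n : ℕ, ‖(blockOp T X U) ^ n‖ ≤ M) :
    ∃ L : WithLp 2 (K × H) ≃L[ℂ] WithLp 2 (K × H),
      (L.symm : WithLp 2 (K × H) →L[ℂ] WithLp 2 (K × H)) ∘L blockOp T X U ∘L
        (L : WithLp 2 (K × H) →L[ℂ] WithLp 2 (K × H)) = blockOp T 0 U := by
  have hC : ∀ n, ‖Cseq U T X n‖ ≤ M := by
    intro n
    have h1 : ‖Sseq T X U n‖ ≤ M := by
      have h2 := norm_corner_le (T ^ n) (Sseq T X U n) (U ^ n)
      rw [← blockOp_pow] at h2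
      exact h2.trans (hpb n)
    have hadj : ‖(adjoint U) ^ n‖ ≤ 1 :=
      norm_isom_pow_le (adjoint U) (by rwa [adjoint_adjoint]) n
    calc ‖Cseq U T X n‖ ≤ ‖Sseq T X U n‖ * ‖(adjoint U) ^ n‖ :=
        ContinuousLinearMap.opNorm_comp_le _ _
      _ ≤ M * 1 := mul_le_mul h1 hadj (norm_nonneg _) ((norm_nonneg _).trans h1)
      _ = M := mul_one M
  obtain ⟨Y, hY⟩ := exists_Y U hU hU' T X M hC
  have hinv1 : blockOp (1 : K →L[ℂ] K) (-Y) 1 ∘L blockOp 1 Y 1 = 1 := by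
    rw [blockOp_comp]
    have : (1 : K →L[ℂ] K) ∘L Y + (-Y) ∘L (1 : H →L[ℂ] H) = 0 := by
      simp [ContinuousLinearMap.one_def]
    rw [this]
    simpa [ContinuousLinearMap.one_def] using blockOp_one
  have hinv2 : blockOp (1 : K →L[ℂ] K) Y 1 ∘L blockOp 1 (-Y) 1 = 1 := by
    rw [blockOp_comp]
    have : (1 : K →L[ℂ] K) ∘L (-Y) + Y ∘L (1 : H →L[ℂ] H) = 0 := by
      simp [ContinuousLinearMap.one_def]
    rw [this]
    simpa [ContinuousLinearMap.one_def] using blockOp_one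
  have hleft : Function.LeftInverse (blockOp (1 : K →L[ℂ] K) (-Y) 1) (blockOp 1 Y 1) :=
    fun v => by rw [← ContinuousLinearMap.comp_apply, hinv1]; rfl
  have hright : Function.RightInverse (blockOp (1 : K →L[ℂ] K) (-Y) 1) (blockOp 1 Y 1) :=
    fun v => by rw [← ContinuousLinearMap.comp_apply, hinv2]; rfl
  set Lq := ContinuousLinearEquiv.equivOfInverse (blockOp 1 Y 1) (blockOp 1 (-Y) 1)
    hleft hright with hLq
  refine ⟨Lq, ?_⟩
  have hc1 : (Lq : WithLp 2 (K × H) →L[ℂ] WithLp 2 (K × H)) = blockOp 1 Y 1 := rfl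
  have hc2 : (Lq.symm : WithLp 2 (K × H) →L[ℂ] WithLp 2 (K × H)) = blockOp 1 (-Y) 1 := rfl
  rw [hc1, hc2, blockOp_comp, blockOp_comp]
  have hcorner : (1 : K →L[ℂ] K) ∘L (T ∘L Y + X ∘L (1 : H →L[ℂ] H)) +
      (-Y) ∘L (U ∘L (1 : H →L[ℂ] H)) = 0 := by
    simp only [ContinuousLinearMap.comp_id, ContinuousLinearMap.id_comp,
      ContinuousLinearMap.one_def, ContinuousLinearMap.neg_comp, hY]
    abel
  rw [hcorner]
  congr 1 <;> simp [ContinuousLinearMap.one_def]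


/-- An operator is similar to a contraction if some conjugate of it by a bounded invertible
operator has norm at most `1`. -/
def SimilarToContraction {E : Type*} [NormedAddCommGroup E] [NormedSpace ℂ E]
    (S : E →L[ℂ] E) : Prop :=
  ∃ L : E ≃L[ℂ] E, ‖(L.symm : E →L[ℂ] E) ∘L S ∘L (L : E →L[ℂ] E)‖ ≤ 1

/-- for `U` unitary and `T` power bounded, `R(X) = [[T, X],[0, U]]` is similar
to `R(0) = T ⊕ U` if and only if `R(X)` is power bounded. -/
theorem stmt3 (U : H →L[ℂ] H) (hU : adjoint U ∘L U = 1) (hU' : U ∘L adjoint U = 1)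
    (T : K →L[ℂ] K) (hT : ∃ M : ℝ, ∀ n : ℕ, ‖T ^ n‖ ≤ M)
    (X : H →L[ℂ] K) :
    (∃ L : WithLp 2 (K × H) ≃L[ℂ] WithLp 2 (K × H),
        (L.symm : WithLp 2 (K × H) →L[ℂ] WithLp 2 (K × H)) ∘L blockOp T X U ∘L
          (L : WithLp 2 (K × H) →L[ℂ] WithLp 2 (K × H)) = blockOp T 0 U) ↔
      (∃ M : ℝ, ∀ n : ℕ, ‖(blockOp T X U) ^ n‖ ≤ M) := by
  constructor
  · rintro ⟨L, hL⟩
    obtain ⟨M, hM⟩ := hT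
    exact stmt3_forward U hU T M hM X L hL
  · rintro ⟨M, hpb⟩
    exact stmt3_reverse U hU hU' T X M hpb
end

section
/- Let T be a coisometry on K (i.e., TT* = I), V a power bounded operator on H, and X a bounded operator from H to K. Then the equation X = TZ - ZV has a bounded solution Z with (I - T*T)Z = 0 if and only if sup_n ||∑_{j=0}^{n} T*^{j+1} X V^{j}|| < ∞. -/
open ContinuousLinearMap Filter Topology

set_option linter.unusedSectionVars false

noncomputable def uL (U : Ultrafilter ℕ) (f : ℕ → ℂ) : ℂ := limUnder (U : Filter ℕ) f

lemma uL_spec (U : Ultrafilter ℕ) (f : ℕ → ℂ) (C : ℝ) (h : ∀ n, ‖f n‖ ≤ C) :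
    Tendsto f (U : Filter ℕ) (𝓝 (uL U f)) := by
  obtain ⟨l, -, hl⟩ := (isCompact_closedBall (0:ℂ) C).ultrafilter_le_nhds (U.map f)
    (by
      rw [Ultrafilter.coe_map, le_principal_iff, mem_map]
      refine Filter.univ_mem' fun n => ?_
      simpa [Metric.mem_closedBall, dist_eq_norm] using h n)
  have hl' : Tendsto f (U : Filter ℕ) (𝓝 l) := by
    rwa [Tendsto, ← Ultrafilter.coe_map]
  rw [uL, hl'.limUnder_eq]
  exact hl'

lemma uL_norm_le (U : Ultrafilter ℕ) (f : ℕ → ℂ) (C : ℝ) (h : ∀ n, ‖f n‖ ≤ C) :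
    ‖uL U f‖ ≤ C :=
  le_of_tendsto ((uL_spec U f C h).norm) (Eventually.of_forall h)

lemma uL_of_tendsto (U : Ultrafilter ℕ) (hU : (U : Filter ℕ) ≤ atTop)
    (f : ℕ → ℂ) (l : ℂ) (h : Tendsto f atTop (𝓝 l)) : uL U f = l :=
  (h.mono_left hU).limUnder_eq

lemma uL_add (U : Ultrafilter ℕ) (f g : ℕ → ℂ) (Cf Cg : ℝ)
    (hf : ∀ n, ‖f n‖ ≤ Cf) (hg : ∀ n, ‖g n‖ ≤ Cg) :
    uL U (fun n => f n + g n) = uL U f + uL U g :=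
  tendsto_nhds_unique
    (uL_spec U _ (Cf + Cg) fun n => (norm_add_le _ _).trans (add_le_add (hf n) (hg n)))
    ((uL_spec U f Cf hf).add (uL_spec U g Cg hg))

lemma uL_sub (U : Ultrafilter ℕ) (f g : ℕ → ℂ) (Cf Cg : ℝ)
    (hf : ∀ n, ‖f n‖ ≤ Cf) (hg : ∀ n, ‖g n‖ ≤ Cg) :
    uL U (fun n => f n - g n) = uL U f - uL U g :=
  tendsto_nhds_unique
    (uL_spec U _ (Cf + Cg) fun n => (norm_sub_le _ _).trans (add_le_add (hf n) (hg n)))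
    ((uL_spec U f Cf hf).sub (uL_spec U g Cg hg))

lemma uL_smul (U : Ultrafilter ℕ) (f : ℕ → ℂ) (c : ℂ) (Cf : ℝ)
    (hf : ∀ n, ‖f n‖ ≤ Cf) :
    uL U (fun n => c * f n) = c * uL U f :=
  tendsto_nhds_unique
    (uL_spec U _ (‖c‖ * Cf) fun n => by
      rw [norm_mul]
      exact mul_le_mul_of_nonneg_left (hf n) (norm_nonneg c))
    ((uL_spec U f Cf hf).const_mul c)

section BWD
variable {K H : Type*}
    [NormedAddCommGroup K] [InnerProductSpace ℂ K] [CompleteSpace K]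
    [NormedAddCommGroup H] [InnerProductSpace ℂ H] [CompleteSpace H]

set_option maxHeartbeats 1000000 in
lemma bwd (T : K →L[ℂ] K) (hT : T ∘L adjoint T = 1)
    (V : H →L[ℂ] H)
    (X : H →L[ℂ] K)
    (h : ∃ M : ℝ, ∀ n : ℕ,
        ‖∑ j ∈ Finset.range (n + 1), ((adjoint T) ^ (j + 1)) ∘L X ∘L (V ^ j)‖ ≤ M) :
    ∃ Z : H →L[ℂ] K, X = T ∘L Z - Z ∘L V ∧ (1 - adjoint T ∘L T) ∘L Z = 0 := by
  classical
  obtain ⟨M₀, hM₀⟩ := h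
  set S : ℕ → (H →L[ℂ] K) :=
    fun n => ∑ j ∈ Finset.range (n + 1), ((adjoint T) ^ (j + 1)) ∘L X ∘L (V ^ j) with hSdef
  set E : ℕ → (H →L[ℂ] K) := fun j => ((adjoint T) ^ j) ∘L X ∘L (V ^ j) with hEdef
  set A : ℕ → (H →L[ℂ] K) :=
    fun n => ((n : ℂ) + 1)⁻¹ • ∑ k ∈ Finset.range (n + 1), S k with hAdef
  have hM0 : 0 ≤ M₀ := le_trans (norm_nonneg _) (hM₀ 0)
  have hT' : T * adjoint T = 1 := hT
  -- basic composition facts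
  have fact1 : ∀ j : ℕ, T ∘L (((adjoint T) ^ (j + 1)) ∘L X ∘L (V ^ j)) = E j := by
    intro j
    have e : T ∘L ((adjoint T) ^ (j + 1)) = (adjoint T) ^ j := by
      rw [← mul_def, pow_succ', ← mul_assoc, hT', one_mul]
    rw [← comp_assoc, e]
  have fact2 : ∀ j : ℕ, (((adjoint T) ^ (j + 1)) ∘L X ∘L (V ^ j)) ∘L V = E (j + 1) := by
    intro j
    have e : (V ^ j) ∘L V = V ^ (j + 1) := by rw [← mul_def, ← pow_succ]
    rw [comp_assoc, comp_assoc, e]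
  have fact3 : ∀ j : ℕ,
      (adjoint T ∘L T) ∘L (((adjoint T) ^ (j + 1)) ∘L X ∘L (V ^ j))
        = ((adjoint T) ^ (j + 1)) ∘L X ∘L (V ^ j) := by
    intro j
    have e : (adjoint T ∘L T) ∘L ((adjoint T) ^ (j + 1)) = (adjoint T) ^ (j + 1) := by
      rw [← mul_def, ← mul_def, pow_succ', ← mul_assoc, mul_assoc (adjoint T) T (adjoint T),
        hT', mul_one]
    rw [← comp_assoc, e]
  have hE0 : E 0 = X := by
    simp [hEdef, ContinuousLinearMap.one_def]
  -- telescoping for S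
  have hTS : ∀ m : ℕ, T ∘L S m = ∑ j ∈ Finset.range (m + 1), E j := by
    intro m
    rw [hSdef, comp_finset_sum]
    exact Finset.sum_congr rfl fun j _ => fact1 j
  have hSV : ∀ m : ℕ, (S m) ∘L V = ∑ j ∈ Finset.range (m + 1), E (j + 1) := by
    intro m
    rw [hSdef, finset_sum_comp]
    exact Finset.sum_congr rfl fun j _ => fact2 j
  have htel : ∀ m : ℕ, T ∘L S m - (S m) ∘L V = X - E (m + 1) := by
    intro m
    rw [hTS, hSV, ← Finset.sum_sub_distrib, Finset.sum_range_sub' E (m + 1), hE0]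
  have hTTS : ∀ m : ℕ, (adjoint T ∘L T) ∘L S m = S m := by
    intro m
    rw [hSdef, comp_finset_sum]
    exact Finset.sum_congr rfl fun j _ => fact3 j
  -- bounds on A
  have hAle : ∀ n : ℕ, ‖A n‖ ≤ M₀ := by
    intro n
    have hnorm : ‖((n : ℂ) + 1)⁻¹‖ = (((n : ℝ) + 1))⁻¹ := by
      rw [norm_inv]
      congr 1
      have : ((n : ℂ) + 1) = (((n + 1 : ℕ)) : ℂ) := by push_cast; ring
      rw [this, Complex.norm_natCast]
      push_cast; ring
    show ‖((n : ℂ) + 1)⁻¹ • ∑ k ∈ Finset.range (n + 1), S k‖ ≤ M₀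
    rw [norm_smul (((n : ℂ) + 1)⁻¹) (∑ k ∈ Finset.range (n + 1), S k), hnorm]
    have hsum : ‖∑ k ∈ Finset.range (n + 1), S k‖ ≤ ((n : ℝ) + 1) * M₀ := by
      calc ‖∑ k ∈ Finset.range (n + 1), S k‖ ≤ ∑ k ∈ Finset.range (n + 1), ‖S k‖ :=
            norm_sum_le _ _
        _ ≤ ∑ _k ∈ Finset.range (n + 1), M₀ := Finset.sum_le_sum fun k _ => hM₀ k
        _ = ((n : ℝ) + 1) * M₀ := by
            rw [Finset.sum_const, Finset.card_range, nsmul_eq_mul]; push_cast; ring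
    have hpos : (0 : ℝ) < (n : ℝ) + 1 := by positivity
    calc (((n : ℝ) + 1))⁻¹ * ‖∑ k ∈ Finset.range (n + 1), S k‖
        ≤ (((n : ℝ) + 1))⁻¹ * (((n : ℝ) + 1) * M₀) := by
          exact mul_le_mul_of_nonneg_left hsum (by positivity)
      _ = M₀ := by field_simp
  have hTTA : ∀ n : ℕ, (adjoint T ∘L T) ∘L A n = A n := by
    intro n
    show (adjoint T ∘L T) ∘L (((n : ℂ) + 1)⁻¹ • ∑ k ∈ Finset.range (n + 1), S k)
        = ((n : ℂ) + 1)⁻¹ • ∑ k ∈ Finset.range (n + 1), S k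
    rw [comp_smulₛₗ, comp_finset_sum, RingHom.id_apply,
      Finset.sum_congr rfl fun k _ => hTTS k]
  -- the key quantitative estimate
  have hRbound : ∀ n : ℕ, ‖T ∘L A n - (A n) ∘L V - X‖ ≤ (‖T‖ * M₀ + ‖X‖) * ((n : ℝ) + 1)⁻¹ := by
    intro n
    have hEsum : ∑ k ∈ Finset.range (n + 1), E (k + 1) = T ∘L S (n + 1) - X := by
      rw [hTS (n + 1), Finset.sum_range_succ' E (n + 1), hE0]
      abel
    have hstep : T ∘L A n - (A n) ∘L V
        = ((n : ℂ) + 1)⁻¹ • (((n + 1 : ℕ) : ℂ) • X - (T ∘L S (n + 1) - X)) := by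
      show T ∘L (((n : ℂ) + 1)⁻¹ • ∑ k ∈ Finset.range (n + 1), S k)
          - (((n : ℂ) + 1)⁻¹ • ∑ k ∈ Finset.range (n + 1), S k) ∘L V = _
      rw [comp_smulₛₗ, smul_comp, RingHom.id_apply, comp_finset_sum, finset_sum_comp,
        ← smul_sub, ← Finset.sum_sub_distrib]
      congr 1
      rw [Finset.sum_congr rfl fun k _ => htel k, Finset.sum_sub_distrib, hEsum,
        Finset.sum_const, Finset.card_range, Nat.cast_smul_eq_nsmul]
    have hne : ((n : ℂ) + 1) ≠ 0 := by
      intro hc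
      have := congrArg Complex.re hc
      simp at this
      linarith [this, Nat.cast_nonneg (α := ℝ) n]
    have hXc : ((n : ℂ) + 1)⁻¹ • (((n + 1 : ℕ) : ℂ) • X) = X := by
      rw [smul_smul]
      have : ((n : ℂ) + 1)⁻¹ * ((n + 1 : ℕ) : ℂ) = 1 := by
        push_cast
        field_simp
      rw [this, one_smul]
    have hfinal : T ∘L A n - (A n) ∘L V - X = -(((n : ℂ) + 1)⁻¹ • (T ∘L S (n + 1) - X)) := by
      rw [hstep, smul_sub, hXc]
      abel
    rw [hfinal, norm_neg, norm_smul (((n : ℂ) + 1)⁻¹) (T ∘L S (n + 1) - X)]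
    have hnorm : ‖((n : ℂ) + 1)⁻¹‖ = (((n : ℝ) + 1))⁻¹ := by
      rw [norm_inv]
      congr 1
      have : ((n : ℂ) + 1) = (((n + 1 : ℕ)) : ℂ) := by push_cast; ring
      rw [this, Complex.norm_natCast]
      push_cast; ring
    rw [hnorm, mul_comm]
    refine mul_le_mul_of_nonneg_right ?_ (by positivity)
    calc ‖T ∘L S (n + 1) - X‖ ≤ ‖T ∘L S (n + 1)‖ + ‖X‖ := norm_sub_le _ _
      _ ≤ ‖T‖ * M₀ + ‖X‖ := by
          refine add_le_add ?_ le_rfl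
          calc ‖T ∘L S (n + 1)‖ ≤ ‖T‖ * ‖S (n + 1)‖ := opNorm_comp_le _ _
            _ ≤ ‖T‖ * M₀ := mul_le_mul_of_nonneg_left (hM₀ _) (norm_nonneg _)
  -- pointwise convergence of T A_n - A_n V to X
  have hzero : Tendsto (fun n : ℕ => (‖T‖ * M₀ + ‖X‖) * ((n : ℝ) + 1)⁻¹) atTop (𝓝 0) := by
    have h1 : Tendsto (fun n : ℕ => ((n : ℝ) + 1)) atTop atTop :=
      tendsto_atTop_add_const_right _ 1 tendsto_natCast_atTop_atTop
    simpa using (h1.inv_tendsto_atTop).const_mul (‖T‖ * M₀ + ‖X‖)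
  have hconv : ∀ (x : H) (y : K),
      Tendsto (fun n : ℕ => (inner ℂ ((T ∘L A n - (A n) ∘L V) x) y : ℂ)) atTop
        (𝓝 (inner ℂ (X x) y)) := by
    intro x y
    rw [tendsto_iff_norm_sub_tendsto_zero]
    refine squeeze_zero (fun n => norm_nonneg _)
      (g := fun n : ℕ => ((‖T‖ * M₀ + ‖X‖) * ((n : ℝ) + 1)⁻¹) * (‖x‖ * ‖y‖)) (fun n => ?_) ?_
    · have e1 : (inner ℂ ((T ∘L A n - (A n) ∘L V) x) y : ℂ) - inner ℂ (X x) y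
          = inner ℂ ((T ∘L A n - (A n) ∘L V - X) x) y := by
        simp [inner_sub_left]
      rw [e1]
      calc ‖(inner ℂ ((T ∘L A n - (A n) ∘L V - X) x) y : ℂ)‖
          ≤ ‖(T ∘L A n - (A n) ∘L V - X) x‖ * ‖y‖ := norm_inner_le_norm _ _
        _ ≤ (‖T ∘L A n - (A n) ∘L V - X‖ * ‖x‖) * ‖y‖ :=
            mul_le_mul_of_nonneg_right (le_opNorm _ _) (norm_nonneg _)
        _ ≤ ((‖T‖ * M₀ + ‖X‖) * ((n : ℝ) + 1)⁻¹) * (‖x‖ * ‖y‖) := by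
            rw [mul_assoc]
            exact mul_le_mul_of_nonneg_right (hRbound n) (by positivity)
    · simpa using hzero.mul_const (‖x‖ * ‖y‖)
  -- the ultrafilter
  have hU : (Ultrafilter.of (atTop : Filter ℕ) : Filter ℕ) ≤ atTop := Ultrafilter.of_le _
  set U := Ultrafilter.of (atTop : Filter ℕ) with hUdef
  -- bound on inner products
  have bnd : ∀ (x : H) (y : K) (n : ℕ), ‖(inner ℂ (A n x) y : ℂ)‖ ≤ M₀ * ‖x‖ * ‖y‖ := by
    intro x y n
    calc ‖(inner ℂ (A n x) y : ℂ)‖ ≤ ‖A n x‖ * ‖y‖ := norm_inner_le_norm _ _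
      _ ≤ (M₀ * ‖x‖) * ‖y‖ := by
          refine mul_le_mul_of_nonneg_right ?_ (norm_nonneg _)
          calc ‖A n x‖ ≤ ‖A n‖ * ‖x‖ := le_opNorm _ _
            _ ≤ M₀ * ‖x‖ := mul_le_mul_of_nonneg_right (hAle n) (norm_nonneg _)
      _ = M₀ * ‖x‖ * ‖y‖ := by ring
  -- the functional for fixed x
  have gdef : ∀ x : H, ∃ g : K →L[ℂ] ℂ,
      (∀ y : K, g y = uL U (fun n => (inner ℂ (A n x) y : ℂ))) ∧ ‖g‖ ≤ M₀ * ‖x‖ := by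
    intro x
    refine ⟨LinearMap.mkContinuous
      { toFun := fun y => uL U (fun n => (inner ℂ (A n x) y : ℂ))
        map_add' := fun y y' => by
          have e : (fun n => (inner ℂ (A n x) (y + y') : ℂ))
              = fun n => (inner ℂ (A n x) y : ℂ) + inner ℂ (A n x) y' := by
            funext n; rw [inner_add_right]
          show uL U (fun n => (inner ℂ (A n x) (y + y') : ℂ))
              = uL U (fun n => (inner ℂ (A n x) y : ℂ)) + uL U (fun n => (inner ℂ (A n x) y' : ℂ))
          rw [e]
          exact uL_add U _ _ (M₀ * ‖x‖ * ‖y‖) (M₀ * ‖x‖ * ‖y'‖) (bnd x y) (bnd x y')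
        map_smul' := fun c y => by
          have e : (fun n => (inner ℂ (A n x) (c • y) : ℂ))
              = fun n => c * (inner ℂ (A n x) y : ℂ) := by
            funext n; rw [inner_smul_right]
          show uL U (fun n => (inner ℂ (A n x) (c • y) : ℂ))
              = (RingHom.id ℂ) c • uL U (fun n => (inner ℂ (A n x) y : ℂ))
          rw [e, RingHom.id_apply, smul_eq_mul]
          exact uL_smul U _ c (M₀ * ‖x‖ * ‖y‖) (bnd x y) }
      (M₀ * ‖x‖) (fun y => uL_norm_le U _ _ (bnd x y)), fun y => rfl,
      LinearMap.mkContinuous_norm_le _ (by positivity) _⟩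
  choose g hg hgnorm using gdef
  -- define Z pointwise
  set Zfun : H → K := fun x => (InnerProductSpace.toDual ℂ K).symm (g x) with hZfdef
  have hZinner : ∀ (x : H) (y : K),
      (inner ℂ (Zfun x) y : ℂ) = uL U (fun n => (inner ℂ (A n x) y : ℂ)) := by
    intro x y
    rw [hZfdef]
    rw [InnerProductSpace.toDual_symm_apply]
    exact hg x y
  have hZnorm : ∀ x : H, ‖Zfun x‖ ≤ M₀ * ‖x‖ := by
    intro x
    rw [hZfdef]
    simpa using hgnorm x
  -- Z is linear
  have hZadd : ∀ x x' : H, Zfun (x + x') = Zfun x + Zfun x' := by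
    intro x x'
    refine ext_inner_right ℂ fun y => ?_
    rw [hZinner, inner_add_left, hZinner, hZinner]
    have : (fun n => (inner ℂ (A n (x + x')) y : ℂ))
        = fun n => (inner ℂ (A n x) y : ℂ) + inner ℂ (A n x') y := by
      funext n; rw [map_add, inner_add_left]
    rw [this]
    exact uL_add U _ _ (M₀ * ‖x‖ * ‖y‖) (M₀ * ‖x'‖ * ‖y‖) (bnd x y) (bnd x' y)
  have hZsmul : ∀ (c : ℂ) (x : H), Zfun (c • x) = c • Zfun x := by
    intro c x
    refine ext_inner_right ℂ fun y => ?_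
    rw [hZinner, inner_smul_left, hZinner]
    have : (fun n => (inner ℂ (A n (c • x)) y : ℂ))
        = fun n => (starRingEnd ℂ) c * (inner ℂ (A n x) y : ℂ) := by
      funext n; rw [map_smul, inner_smul_left]
    rw [this]
    exact uL_smul U _ _ (M₀ * ‖x‖ * ‖y‖) (bnd x y)
  set Z : H →L[ℂ] K := LinearMap.mkContinuous
    { toFun := Zfun, map_add' := hZadd, map_smul' := hZsmul } M₀
    (fun x => by simpa using hZnorm x) with hZdef
  have hZapp : ∀ x : H, Z x = Zfun x := fun x => rfl
  refine ⟨Z, ?_, ?_⟩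
  · -- X = T Z - Z V
    ext x
    refine ext_inner_right ℂ fun y => ?_
    have h1 : (inner ℂ (T (Z x)) y : ℂ)
        = uL U (fun n => (inner ℂ (A n x) ((adjoint T) y) : ℂ)) := by
      rw [← adjoint_inner_right, hZapp, hZinner]
    have h2 : (inner ℂ (Z (V x)) y : ℂ) = uL U (fun n => (inner ℂ (A n (V x)) y : ℂ)) := by
      rw [hZapp, hZinner]
    have h3 : (inner ℂ ((T ∘L Z - Z ∘L V) x) y : ℂ)
        = (inner ℂ (T (Z x)) y : ℂ) - inner ℂ (Z (V x)) y := by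
      simp [inner_sub_left]
    rw [h3, h1, h2, ← uL_sub U _ _ (M₀ * ‖x‖ * ‖(adjoint T) y‖) (M₀ * ‖V x‖ * ‖y‖)
      (bnd x ((adjoint T) y)) (bnd (V x) y)]
    have e : (fun n => (inner ℂ (A n x) ((adjoint T) y) : ℂ) - inner ℂ (A n (V x)) y)
        = fun n => (inner ℂ ((T ∘L A n - (A n) ∘L V) x) y : ℂ) := by
      funext n
      simp only [ContinuousLinearMap.sub_apply, ContinuousLinearMap.comp_apply,
        inner_sub_left, adjoint_inner_right]
    rw [e, uL_of_tendsto U hU _ _ (hconv x y)]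
  · -- (1 - T* T) Z = 0
    ext x
    simp only [ContinuousLinearMap.comp_apply, ContinuousLinearMap.sub_apply,
      ContinuousLinearMap.one_apply, ContinuousLinearMap.zero_apply, sub_eq_zero]
    refine (ext_inner_right ℂ fun y => ?_).symm
    have lhs : (inner ℂ ((adjoint T) (T (Z x))) y : ℂ)
        = uL U (fun n => (inner ℂ (A n x) ((adjoint T) (T y)) : ℂ)) := by
      rw [adjoint_inner_left, ← adjoint_inner_right, hZapp, hZinner]
    have e : (fun n => (inner ℂ (A n x) ((adjoint T) (T y)) : ℂ))
        = fun n => (inner ℂ (A n x) y : ℂ) := by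
      funext n
      have h2 : (inner ℂ (A n x) ((adjoint T) (T y)) : ℂ)
          = inner ℂ (((adjoint T ∘L T) ∘L A n) x) y := by
        rw [adjoint_inner_right, ← adjoint_inner_left]
        rfl
      rw [h2, hTTA]
    rw [lhs, e, hZapp, hZinner]
end BWD

section FWD
variable {K H : Type*}
    [NormedAddCommGroup K] [InnerProductSpace ℂ K] [CompleteSpace K]
    [NormedAddCommGroup H] [InnerProductSpace ℂ H] [CompleteSpace H]

set_option maxHeartbeats 1000000 in
lemma fwd (T : K →L[ℂ] K) (hT : T ∘L adjoint T = 1)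
    (V : H →L[ℂ] H) (hV : ∃ M : ℝ, ∀ n : ℕ, ‖V ^ n‖ ≤ M)
    (X : H →L[ℂ] K)
    (h : ∃ Z : H →L[ℂ] K, X = T ∘L Z - Z ∘L V ∧ (1 - adjoint T ∘L T) ∘L Z = 0) :
    (∃ M : ℝ, ∀ n : ℕ,
        ‖∑ j ∈ Finset.range (n + 1), ((adjoint T) ^ (j + 1)) ∘L X ∘L (V ^ j)‖ ≤ M) := by
  obtain ⟨Z, hX, hZ0⟩ := h
  obtain ⟨Mv, hMv⟩ := hV
  have hMv0 : 0 ≤ Mv := le_trans (norm_nonneg _) (hMv 0)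
  have hT' : T * adjoint T = 1 := hT
  -- Z = T*T Z
  have hZ : (adjoint T ∘L T) ∘L Z = Z := by
    have h2 := hZ0
    rw [sub_comp, ContinuousLinearMap.one_def, ContinuousLinearMap.id_comp,
      sub_eq_zero] at h2
    exact h2.symm
  -- norm of powers of adjoint T
  have hTstar : ∀ y : K, ‖adjoint T y‖ = ‖y‖ := by
    intro y
    have h1 : (inner ℂ (adjoint T y) (adjoint T y) : ℂ) = inner ℂ y y := by
      rw [adjoint_inner_left]
      have : T (adjoint T y) = y := by
        conv_rhs => rw [← (ContinuousLinearMap.one_apply y : (1 : K →L[ℂ] K) y = y), ← hT]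
        rfl
      rw [this]
    have h2 : (‖adjoint T y‖ : ℂ) ^ 2 = (‖y‖ : ℂ) ^ 2 := by
      rwa [inner_self_eq_norm_sq_to_K, inner_self_eq_norm_sq_to_K] at h1
    have h3 : (‖adjoint T y‖ : ℝ) ^ 2 = (‖y‖ : ℝ) ^ 2 := by
      exact_mod_cast h2
    rw [← Real.sqrt_sq (norm_nonneg ((adjoint T) y)), h3, Real.sqrt_sq (norm_nonneg y)]
  have hTsn : ‖adjoint T‖ ≤ 1 := by
    refine opNorm_le_bound _ zero_le_one fun y => ?_
    rw [hTstar, one_mul]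
  have hpow : ∀ m : ℕ, ‖(adjoint T) ^ m‖ ≤ 1 := by
    intro m
    induction m with
    | zero => simpa [pow_zero, ContinuousLinearMap.one_def] using
        (norm_id_le : ‖ContinuousLinearMap.id ℂ K‖ ≤ 1)
    | succ m ih =>
      calc ‖(adjoint T) ^ (m+1)‖ = ‖(adjoint T) ^ m * adjoint T‖ := by rw [pow_succ]
      _ ≤ ‖(adjoint T) ^ m‖ * ‖adjoint T‖ := norm_mul_le _ _
      _ ≤ 1 * 1 := mul_le_mul ih hTsn (norm_nonneg _) zero_le_one
      _ = 1 := one_mul 1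
  have key : ∀ j : ℕ, ((adjoint T) ^ (j + 1)) ∘L X ∘L (V ^ j)
      = (((adjoint T) ^ j) ∘L Z ∘L (V ^ j)) - (((adjoint T) ^ (j+1)) ∘L Z ∘L (V ^ (j+1))) := by
    intro j
    have e0 : ((adjoint T) ^ (j+1)) ∘L T = ((adjoint T) ^ j) ∘L (adjoint T ∘L T) := by
      rw [← mul_def, ← mul_def, ← mul_def, pow_succ, mul_assoc]
    have e1 : ((adjoint T) ^ (j+1)) ∘L (T ∘L Z) = ((adjoint T) ^ j) ∘L Z := by
      rw [← comp_assoc, e0, comp_assoc, hZ]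
    have e2 : V ∘L (V ^ j) = V ^ (j+1) := by
      rw [← mul_def, pow_succ']
    have e1' : ((adjoint T) ^ (j+1)) ∘L (T ∘L (Z ∘L (V ^ j)))
        = ((adjoint T) ^ j) ∘L (Z ∘L (V ^ j)) := by
      rw [← comp_assoc T Z (V ^ j), ← comp_assoc, e1, comp_assoc]
    have e2' : ((adjoint T) ^ (j+1)) ∘L ((Z ∘L V) ∘L (V ^ j))
        = ((adjoint T) ^ (j+1)) ∘L (Z ∘L (V ^ (j+1))) := by
      rw [comp_assoc Z V (V ^ j), e2]
    rw [hX, sub_comp, comp_sub, comp_assoc T Z (V ^ j), e1', e2', ← comp_assoc,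
      ← comp_assoc]
  refine ⟨‖Z‖ + ‖Z‖ * Mv, fun n => ?_⟩
  have hsum : ∑ j ∈ Finset.range (n + 1), ((adjoint T) ^ (j + 1)) ∘L X ∘L (V ^ j)
      = Z - (((adjoint T) ^ (n+1)) ∘L Z ∘L (V ^ (n+1))) := by
    have := Finset.sum_range_sub'
      (f := fun j => ((adjoint T) ^ j) ∘L Z ∘L (V ^ j)) (n := n + 1)
    rw [Finset.sum_congr rfl (fun j _ => key j), this]
    simp [ContinuousLinearMap.one_def]
  rw [hsum]
  calc ‖Z - (((adjoint T) ^ (n+1)) ∘L Z ∘L (V ^ (n+1)))‖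
      ≤ ‖Z‖ + ‖((adjoint T) ^ (n+1)) ∘L Z ∘L (V ^ (n+1))‖ := norm_sub_le _ _
    _ ≤ ‖Z‖ + ‖Z‖ * Mv := by
        refine add_le_add le_rfl ?_
        calc ‖((adjoint T) ^ (n+1)) ∘L Z ∘L (V ^ (n+1))‖
            ≤ ‖(adjoint T) ^ (n+1)‖ * ‖Z ∘L (V ^ (n+1))‖ := opNorm_comp_le _ _
          _ ≤ 1 * (‖Z‖ * Mv) := by
              refine mul_le_mul (hpow _) ?_ (norm_nonneg _) zero_le_one
              calc ‖Z ∘L (V ^ (n+1))‖ ≤ ‖Z‖ * ‖V ^ (n+1)‖ := opNorm_comp_le _ _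
                _ ≤ ‖Z‖ * Mv := mul_le_mul_of_nonneg_left (hMv _) (norm_nonneg _)
          _ = ‖Z‖ * Mv := one_mul _
end FWD

/-- if `T` is a coisometry (`T T* = I`) and `V` is power bounded, then the
equation `X = TZ - ZV` has a bounded solution `Z` with `(I - T* T) Z = 0` if and only if
the partial sums `∑_{j=0}^{n} T*^(j+1) X V^j` are uniformly bounded in norm. -/
theorem stmt4 {K H : Type*}
    [NormedAddCommGroup K] [InnerProductSpace ℂ K] [CompleteSpace K]
    [NormedAddCommGroup H] [InnerProductSpace ℂ H] [CompleteSpace H]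
    (T : K →L[ℂ] K) (hT : T ∘L adjoint T = 1)
    (V : H →L[ℂ] H) (hV : ∃ M : ℝ, ∀ n : ℕ, ‖V ^ n‖ ≤ M)
    (X : H →L[ℂ] K) :
    (∃ Z : H →L[ℂ] K, X = T ∘L Z - Z ∘L V ∧ (1 - adjoint T ∘L T) ∘L Z = 0) ↔
      (∃ M : ℝ, ∀ n : ℕ,
        ‖∑ j ∈ Finset.range (n + 1), ((adjoint T) ^ (j + 1)) ∘L X ∘L (V ^ j)‖ ≤ M) :=
  ⟨fun h => fwd T hT V hV X h, fun h => bwd T hT V X h⟩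
end

section
/- Let V be an isometry on H, T a right invertible contraction on K, and X a bounded operator from H to K. Suppose X = A + F where A, F are bounded operators H → K with sup_n ||∑_{j=0}^{n} T^j A V*^{j+1}|| < ∞ and F V = 0. Then the equation X = TZ - ZV has a bounded solution Z; consequently R(X) = [[T,X],[0,V]] is similar to a contraction. -/
open ContinuousLinearMap

variable {K H : Type*}
  [NormedAddCommGroup K] [InnerProductSpace ℂ K] [CompleteSpace K]
  [NormedAddCommGroup H] [InnerProductSpace ℂ H] [CompleteSpace H]

noncomputable section
namespace Stmt5Aux
open Filter BoundedContinuousFunction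


/-- Cesàro average of the first `n+1` values. -/
def avg (f : ℕ →ᵇ ℝ) (n : ℕ) : ℝ := (∑ k ∈ Finset.range (n + 1), f k) / (n + 1)

lemma abs_avg_le (f : ℕ →ᵇ ℝ) (n : ℕ) : |avg f n| ≤ ‖f‖ := by
  have h1 : |∑ k ∈ Finset.range (n + 1), f k| ≤ (n + 1 : ℝ) * ‖f‖ := by
    calc |∑ k ∈ Finset.range (n + 1), f k| ≤ ∑ k ∈ Finset.range (n + 1), |f k| :=
          Finset.abs_sum_le_sum_abs _ _
      _ ≤ ∑ k ∈ Finset.range (n + 1), ‖f‖ := by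
          refine Finset.sum_le_sum fun k _ => ?_
          simpa [Real.norm_eq_abs] using f.norm_coe_le_norm k
      _ = (n + 1 : ℝ) * ‖f‖ := by simp [mul_comm]
  have hn : (0 : ℝ) < n + 1 := by positivity
  rw [avg, abs_div, abs_of_pos hn, div_le_iff₀ hn]
  linarith [h1]

lemma avg_add (f g : ℕ →ᵇ ℝ) (n : ℕ) : avg (f + g) n = avg f n + avg g n := by
  simp [avg, Finset.sum_add_distrib, add_div]

lemma avg_smul (c : ℝ) (f : ℕ →ᵇ ℝ) (n : ℕ) : avg (c • f) n = c * avg f n := by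
  simp [avg, ← Finset.mul_sum, mul_div_assoc]

lemma avg_zero (n : ℕ) : avg (0 : ℕ →ᵇ ℝ) n = 0 := by simp [avg]

/-- The set of eventual upper bounds of the Cesàro averages. -/
def pS (f : ℕ →ᵇ ℝ) : Set ℝ := {a | ∀ᶠ n in atTop, avg f n ≤ a}

def p (f : ℕ →ᵇ ℝ) : ℝ := sInf (pS f)

lemma norm_mem_pS (f : ℕ →ᵇ ℝ) : ‖f‖ ∈ pS f :=
  Filter.Eventually.of_forall fun n => (le_of_abs_le (abs_avg_le f n))

lemma pS_nonempty (f : ℕ →ᵇ ℝ) : (pS f).Nonempty := ⟨‖f‖, norm_mem_pS f⟩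

lemma le_of_mem_pS {f : ℕ →ᵇ ℝ} {a : ℝ} (ha : a ∈ pS f) : -‖f‖ ≤ a := by
  obtain ⟨n, hn⟩ := ha.exists
  exact le_trans (neg_le_of_abs_le (abs_avg_le f n)) hn

lemma pS_bddBelow (f : ℕ →ᵇ ℝ) : BddBelow (pS f) :=
  ⟨-‖f‖, fun _ ha => le_of_mem_pS ha⟩

lemma p_le_of_mem {f : ℕ →ᵇ ℝ} {a : ℝ} (ha : a ∈ pS f) : p f ≤ a :=
  csInf_le (pS_bddBelow f) ha

lemma p_le_norm (f : ℕ →ᵇ ℝ) : p f ≤ ‖f‖ := p_le_of_mem (norm_mem_pS f)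

lemma neg_norm_le_p (f : ℕ →ᵇ ℝ) : -‖f‖ ≤ p f :=
  le_csInf (pS_nonempty f) fun _ ha => le_of_mem_pS ha

lemma p_add_le (f g : ℕ →ᵇ ℝ) : p (f + g) ≤ p f + p g := by
  have key : ∀ a ∈ pS f, ∀ b ∈ pS g, p (f + g) ≤ a + b := by
    intro a ha b hb
    refine p_le_of_mem ?_
    filter_upwards [ha, hb] with n h1 h2
    rw [avg_add]; exact add_le_add h1 h2
  have step : ∀ b ∈ pS g, p (f + g) ≤ p f + b := by
    intro b hb
    have : p (f + g) - b ≤ p f :=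
      le_csInf (pS_nonempty f) fun a ha => by linarith [key a ha b hb]
    linarith
  have : p (f + g) - p f ≤ p g :=
    le_csInf (pS_nonempty g) fun b hb => by linarith [step b hb]
  linarith

lemma p_smul_le (c : ℝ) (hc : 0 < c) (f : ℕ →ᵇ ℝ) : p (c • f) ≤ c * p f := by
  have key : ∀ a ∈ pS f, p (c • f) ≤ c * a := by
    intro a ha
    refine p_le_of_mem ?_
    filter_upwards [ha] with n h1
    rw [avg_smul]
    exact mul_le_mul_of_nonneg_left h1 hc.le
  have : p (c • f) / c ≤ p f :=
    le_csInf (pS_nonempty f) fun a ha => (div_le_iff₀' hc).2 (key a ha)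
  calc p (c • f) = c * (p (c • f) / c) := by field_simp
    _ ≤ c * p f := mul_le_mul_of_nonneg_left this hc.le

lemma p_smul (c : ℝ) (hc : 0 < c) (f : ℕ →ᵇ ℝ) : p (c • f) = c * p f := by
  refine le_antisymm (p_smul_le c hc f) ?_
  have h2 := p_smul_le c⁻¹ (by positivity) (c • f)
  rw [smul_smul, inv_mul_cancel₀ hc.ne', one_smul] at h2
  calc c * p f ≤ c * (c⁻¹ * p (c • f)) := mul_le_mul_of_nonneg_left h2 hc.le
    _ = p (c • f) := by field_simp

lemma p_zero : p (0 : ℕ →ᵇ ℝ) = 0 := by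
  refine le_antisymm (p_le_of_mem ?_) (le_csInf (pS_nonempty 0) fun a ha => ?_)
  · exact Filter.Eventually.of_forall fun n => by rw [avg_zero]
  · obtain ⟨n, hn⟩ := ha.exists
    rw [avg_zero] at hn; exact hn

lemma exists_LIM : ∃ L : (ℕ →ᵇ ℝ) →ₗ[ℝ] ℝ, ∀ f, L f ≤ p f := by
  have H := exists_extension_of_le_sublinear (⟨⊥, 0⟩ : (ℕ →ᵇ ℝ) →ₗ.[ℝ] ℝ) p
    (fun c hc x => p_smul c hc x) (fun x y => p_add_le x y) ?hf
  case hf =>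
    rintro ⟨x, hx⟩
    obtain rfl : x = 0 := by simpa using hx
    simp [p_zero]
  obtain ⟨g, -, hg⟩ := H
  exact ⟨g, hg⟩

def LIM : (ℕ →ᵇ ℝ) →ₗ[ℝ] ℝ := exists_LIM.choose

lemma LIM_le_p (f : ℕ →ᵇ ℝ) : LIM f ≤ p f := exists_LIM.choose_spec f

lemma abs_LIM_le (f : ℕ →ᵇ ℝ) : |LIM f| ≤ ‖f‖ := by
  rw [abs_le]
  constructor
  · have h1 : LIM (-f) ≤ p (-f) := LIM_le_p (-f)
    have h2 : p (-f) ≤ ‖f‖ := (p_le_norm (-f)).trans_eq (norm_neg f)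
    rw [map_neg] at h1
    linarith
  · exact (LIM_le_p f).trans (p_le_norm f)

/-- Shift of a bounded sequence. -/
def shiftb (f : ℕ →ᵇ ℝ) : ℕ →ᵇ ℝ :=
  ofNormedAddCommGroup (fun n => f (n + 1)) continuous_of_discreteTopology ‖f‖
    (fun n => f.norm_coe_le_norm (n + 1))

@[simp] lemma shiftb_apply (f : ℕ →ᵇ ℝ) (n : ℕ) : shiftb f n = f (n + 1) := rfl

lemma p_nonpos_of_small {g : ℕ →ᵇ ℝ} (h : ∀ ε > (0:ℝ), ∀ᶠ n in atTop, avg g n ≤ ε) :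
    p g ≤ 0 := by
  by_contra hc
  push_neg at hc
  have := p_le_of_mem (h (p g / 2) (by linarith))
  linarith

lemma avg_shiftb_sub (f : ℕ →ᵇ ℝ) (n : ℕ) :
    avg (shiftb f - f) n = (f (n + 1) - f 0) / (n + 1) := by
  have h1 : ∀ k, (shiftb f - f) k = f (k + 1) - f k := fun k => by
    simp [BoundedContinuousFunction.coe_sub]
  have h2 : ∑ k ∈ Finset.range (n + 1), (shiftb f - f) k = f (n + 1) - f 0 := by
    rw [Finset.sum_congr rfl fun k _ => h1 k]
    exact Finset.sum_range_sub (fun k => f k) (n + 1)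
  rw [avg, h2]

lemma p_shift_sub_nonpos (f : ℕ →ᵇ ℝ) (s : ℝ) (hs : s = 1 ∨ s = -1) :
    p (s • (shiftb f - f)) ≤ 0 := by
  refine p_nonpos_of_small fun ε hε => ?_
  have hb : ∀ n : ℕ, |avg (s • (shiftb f - f)) n| ≤ 2 * ‖f‖ / (n + 1) := by
    intro n
    have hn : (0:ℝ) < n + 1 := by positivity
    rw [avg_smul, abs_mul, avg_shiftb_sub, abs_div, abs_of_pos hn]
    have hs1 : |s| = 1 := by rcases hs with rfl | rfl <;> simp
    have a1 : |f (n+1)| ≤ ‖f‖ := by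
      simpa [Real.norm_eq_abs] using f.norm_coe_le_norm (n+1)
    have a2 : |f 0| ≤ ‖f‖ := by
      simpa [Real.norm_eq_abs] using f.norm_coe_le_norm 0
    have a1' := abs_le.mp a1
    have a2' := abs_le.mp a2
    have h3 : |f (n+1) - f 0| ≤ 2 * ‖f‖ :=
      abs_le.mpr ⟨by linarith [a1'.1, a2'.2], by linarith [a1'.2, a2'.1]⟩
    rw [hs1, one_mul]
    exact div_le_div_of_nonneg_right h3 hn.le
  have hN : ∀ᶠ n : ℕ in atTop, 2 * ‖f‖ / (n + 1 : ℝ) ≤ ε := by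
    have ht : Tendsto (fun n : ℕ => 2 * ‖f‖ / (n + 1 : ℝ)) atTop (nhds 0) := by
      apply Tendsto.div_atTop tendsto_const_nhds
      exact tendsto_atTop_add_const_right _ 1 tendsto_natCast_atTop_atTop
    exact (ht.eventually_lt_const hε).mono fun n h => h.le
  filter_upwards [hN] with n hn
  exact (le_of_abs_le (hb n)).trans hn

lemma LIM_shift (f : ℕ →ᵇ ℝ) : LIM (shiftb f) = LIM f := by
  have h1 : LIM (shiftb f - f) ≤ 0 := by
    have := p_shift_sub_nonpos f 1 (Or.inl rfl)
    rw [one_smul] at this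
    exact (LIM_le_p _).trans this
  have h2 : LIM (shiftb f) - LIM f = LIM (shiftb f - f) := (map_sub LIM _ _).symm
  have h3 : -(LIM (shiftb f - f)) ≤ 0 := by
    have hp := p_shift_sub_nonpos f (-1) (Or.inr rfl)
    have : LIM ((-1 : ℝ) • (shiftb f - f)) ≤ 0 := (LIM_le_p _).trans hp
    rw [map_smul, smul_eq_mul] at this
    linarith
  linarith

lemma LIM_const (c : ℝ) : LIM (BoundedContinuousFunction.const ℕ c) = c := by
  have havg : ∀ n, avg (BoundedContinuousFunction.const ℕ c) n = c := by
    intro n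
    simp [avg, mul_comm]
    field_simp
  have h1 : p (BoundedContinuousFunction.const ℕ c) ≤ c :=
    p_le_of_mem (Filter.Eventually.of_forall fun n => (havg n).le)
  have h2 : ∀ c, LIM (BoundedContinuousFunction.const ℕ c) ≤ c := by
    intro c
    refine (LIM_le_p _).trans (p_le_of_mem (Filter.Eventually.of_forall fun n => ?_))
    simp [avg, mul_comm]
    field_simp
    exact le_rfl
  have h3 := h2 c
  have h4 := h2 (-c)
  have h5 : (BoundedContinuousFunction.const ℕ (-c)) =
      -(BoundedContinuousFunction.const ℕ c) := by ext n; simp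
  rw [h5, map_neg] at h4
  linarith

/-- real part as a bounded function -/
def bre (f : ℕ →ᵇ ℂ) : ℕ →ᵇ ℝ :=
  ofNormedAddCommGroup (fun n => (f n).re) continuous_of_discreteTopology ‖f‖
    (fun n => by
      rw [Real.norm_eq_abs]
      exact (Complex.abs_re_le_norm _).trans (by simpa using f.norm_coe_le_norm n))

def bim (f : ℕ →ᵇ ℂ) : ℕ →ᵇ ℝ :=
  ofNormedAddCommGroup (fun n => (f n).im) continuous_of_discreteTopology ‖f‖
    (fun n => by
      rw [Real.norm_eq_abs]
      exact (Complex.abs_im_le_norm _).trans (by simpa using f.norm_coe_le_norm n))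

@[simp] lemma bre_apply (f : ℕ →ᵇ ℂ) (n : ℕ) : bre f n = (f n).re := rfl
@[simp] lemma bim_apply (f : ℕ →ᵇ ℂ) (n : ℕ) : bim f n = (f n).im := rfl


lemma norm_bre_le (f : ℕ →ᵇ ℂ) : ‖bre f‖ ≤ ‖f‖ :=
  norm_ofNormedAddCommGroup_le _ (norm_nonneg f) _

lemma norm_bim_le (f : ℕ →ᵇ ℂ) : ‖bim f‖ ≤ ‖f‖ :=
  norm_ofNormedAddCommGroup_le _ (norm_nonneg f) _

/-- complex Banach limit -/
def Lc (f : ℕ →ᵇ ℂ) : ℂ := ⟨LIM (bre f), LIM (bim f)⟩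

lemma bre_add (f g : ℕ →ᵇ ℂ) : bre (f + g) = bre f + bre g := by ext n; simp
lemma bim_add (f g : ℕ →ᵇ ℂ) : bim (f + g) = bim f + bim g := by ext n; simp
lemma bre_smul (c : ℂ) (f : ℕ →ᵇ ℂ) : bre (c • f) = c.re • bre f - c.im • bim f := by
  ext n; simp [Complex.mul_re]
lemma bim_smul (c : ℂ) (f : ℕ →ᵇ ℂ) : bim (c • f) = c.re • bim f + c.im • bre f := by
  ext n; simp [Complex.mul_im]

lemma Lc_add (f g : ℕ →ᵇ ℂ) : Lc (f + g) = Lc f + Lc g := by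
  apply Complex.ext <;> simp [Lc, bre_add, bim_add]

lemma Lc_smul (c : ℂ) (f : ℕ →ᵇ ℂ) : Lc (c • f) = c * Lc f := by
  apply Complex.ext <;>
    simp [Lc, bre_smul, bim_smul, map_sub, map_add, map_smul, Complex.mul_re, Complex.mul_im,
      smul_eq_mul]

lemma Lc_sub (f g : ℕ →ᵇ ℂ) : Lc (f - g) = Lc f - Lc g := by
  have h := Lc_add (f - g) g
  rw [sub_add_cancel] at h
  rw [h]; ring

lemma norm_Lc_le (f : ℕ →ᵇ ℂ) : ‖Lc f‖ ≤ 2 * ‖f‖ := by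
  have h1 : ‖Lc f‖ ≤ |(Lc f).re| + |(Lc f).im| := Complex.norm_le_abs_re_add_abs_im _
  have h2 : |(Lc f).re| ≤ ‖f‖ := (abs_LIM_le _).trans (norm_bre_le f)
  have h3 : |(Lc f).im| ≤ ‖f‖ := (abs_LIM_le _).trans (norm_bim_le f)
  calc ‖Lc f‖ ≤ |(Lc f).re| + |(Lc f).im| := h1
    _ ≤ 2 * ‖f‖ := by linarith

lemma Lc_const (c : ℂ) : Lc (BoundedContinuousFunction.const ℕ c) = c := by
  have h1 : bre (BoundedContinuousFunction.const ℕ c) = BoundedContinuousFunction.const ℕ c.re := by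
    ext n; simp
  have h2 : bim (BoundedContinuousFunction.const ℕ c) = BoundedContinuousFunction.const ℕ c.im := by
    ext n; simp
  apply Complex.ext <;> simp [Lc, h1, h2, LIM_const]

/-- shift of a bounded complex sequence -/
def cshift (f : ℕ →ᵇ ℂ) : ℕ →ᵇ ℂ :=
  ofNormedAddCommGroup (fun n => f (n + 1)) continuous_of_discreteTopology ‖f‖
    (fun n => f.norm_coe_le_norm (n + 1))

@[simp] lemma cshift_apply (f : ℕ →ᵇ ℂ) (n : ℕ) : cshift f n = f (n + 1) := rfl

lemma Lc_cshift (f : ℕ →ᵇ ℂ) : Lc (cshift f) = Lc f := by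
  have h1 : bre (cshift f) = shiftb (bre f) := by ext n; simp [shiftb]
  have h2 : bim (cshift f) = shiftb (bim f) := by ext n; simp [shiftb]
  have h1' : LIM (bre (cshift f)) = LIM (bre f) := by rw [h1]; exact LIM_shift (bre f)
  have h2' : LIM (bim (cshift f)) = LIM (bim f) := by rw [h2]; exact LIM_shift (bim f)
  apply Complex.ext <;> simp [Lc, h1', h2']

local notation "⟪" x ", " y "⟫" => @inner ℂ _ _ x y

lemma exists_sol (V : H →L[ℂ] H) (hV : adjoint V ∘L V = 1) (T : K →L[ℂ] K)
    (A : H →L[ℂ] K) (M : ℝ)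
    (hM : ∀ n : ℕ,
      ‖∑ j ∈ Finset.range (n + 1), (T ^ j) ∘L A ∘L ((adjoint V) ^ (j + 1))‖ ≤ M) :
    ∃ W : H →L[ℂ] K, T ∘L W - W ∘L V = A := by
  classical
  set S : ℕ → (H →L[ℂ] K) :=
    fun n => ∑ j ∈ Finset.range (n + 1), (T ^ j) ∘L A ∘L ((adjoint V) ^ (j + 1)) with hS
  have hM0 : 0 ≤ M := (norm_nonneg _).trans (hM 0)
  -- the bounded sequences of inner products
  have hbound : ∀ (h : H) (k : K) (n : ℕ), ‖(⟪S n h, k⟫ : ℂ)‖ ≤ M * ‖h‖ * ‖k‖ := by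
    intro h k n
    calc ‖(⟪S n h, k⟫ : ℂ)‖ ≤ ‖S n h‖ * ‖k‖ := norm_inner_le_norm _ _
      _ ≤ (M * ‖h‖) * ‖k‖ := by
          have h1 : ‖S n h‖ ≤ ‖S n‖ * ‖h‖ := (S n).le_opNorm h
          have h2 : ‖S n‖ * ‖h‖ ≤ M * ‖h‖ :=
            mul_le_mul_of_nonneg_right (hM n) (norm_nonneg h)
          exact mul_le_mul_of_nonneg_right (h1.trans h2) (norm_nonneg k)
      _ = M * ‖h‖ * ‖k‖ := by ring
  set φ : H → K → (ℕ →ᵇ ℂ) := fun h k =>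
    ofNormedAddCommGroup (fun n => (⟪S n h, k⟫ : ℂ)) continuous_of_discreteTopology
      (M * ‖h‖ * ‖k‖) (hbound h k) with hφ
  have φ_apply : ∀ h k n, φ h k n = ⟪S n h, k⟫ := fun h k n => rfl
  have φ_norm : ∀ h k, ‖φ h k‖ ≤ M * ‖h‖ * ‖k‖ := fun h k =>
    norm_ofNormedAddCommGroup_le _ (by positivity) _
  set B : H → K → ℂ := fun h k => Lc (φ h k) with hB
  have B_bound : ∀ h k, ‖B h k‖ ≤ 2 * (M * ‖h‖) * ‖k‖ := by
    intro h k
    calc ‖B h k‖ ≤ 2 * ‖φ h k‖ := norm_Lc_le _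
      _ ≤ 2 * (M * ‖h‖ * ‖k‖) := by
          have := φ_norm h k; linarith
      _ = 2 * (M * ‖h‖) * ‖k‖ := by ring
  have B_add_right : ∀ h k k', B h (k + k') = B h k + B h k' := by
    intro h k k'
    simp only [hB]
    have : φ h (k + k') = φ h k + φ h k' := by
      ext n; simp [φ_apply, inner_add_right]
    rw [this, Lc_add]
  have B_smul_right : ∀ (c : ℂ) h k, B h (c • k) = c * B h k := by
    intro c h k
    simp only [hB]
    have : φ h (c • k) = c • φ h k := by
      ext n; simp [φ_apply, inner_smul_right]
    rw [this, Lc_smul]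
  have B_add_left : ∀ h h' k, B (h + h') k = B h k + B h' k := by
    intro h h' k
    simp only [hB]
    have : φ (h + h') k = φ h k + φ h' k := by
      ext n; simp [φ_apply, inner_add_left]
    rw [this, Lc_add]
  have B_smul_left : ∀ (c : ℂ) h k, B (c • h) k = (starRingEnd ℂ) c * B h k := by
    intro c h k
    simp only [hB]
    have : φ (c • h) k = (starRingEnd ℂ) c • φ h k := by
      ext n; simp [φ_apply, inner_smul_left, mul_comm]
    rw [this, Lc_smul]
  -- the functional for each h
  set Z0 : H → K := fun h =>
    (InnerProductSpace.toDual ℂ K).symm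
      (LinearMap.mkContinuous
        { toFun := fun k => B h k
          map_add' := fun k k' => B_add_right h k k'
          map_smul' := fun c k => B_smul_right c h k }
        (2 * (M * ‖h‖)) (fun k => B_bound h k)) with hZ0
  have Z0_inner : ∀ h k, ⟪Z0 h, k⟫ = B h k := by
    intro h k
    rw [hZ0]
    exact InnerProductSpace.toDual_symm_apply
  -- Z0 is linear and bounded
  have Z0_add : ∀ h h', Z0 (h + h') = Z0 h + Z0 h' := by
    intro h h'
    refine ext_inner_right ℂ fun k => ?_
    rw [Z0_inner, inner_add_left, Z0_inner, Z0_inner, B_add_left]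
  have Z0_smul : ∀ (c : ℂ) h, Z0 (c • h) = c • Z0 h := by
    intro c h
    refine ext_inner_right ℂ fun k => ?_
    rw [Z0_inner, inner_smul_left, Z0_inner, B_smul_left]
  have Z0_norm : ∀ h, ‖Z0 h‖ ≤ (2 * M) * ‖h‖ := by
    intro h
    rw [hZ0]
    rw [LinearIsometryEquiv.norm_map]
    calc ‖_‖ ≤ 2 * (M * ‖h‖) := LinearMap.mkContinuous_norm_le _ (by positivity) _
      _ = (2 * M) * ‖h‖ := by ring
  set Z : H →L[ℂ] K := LinearMap.mkContinuous
    { toFun := Z0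
      map_add' := Z0_add
      map_smul' := Z0_smul } (2 * M) Z0_norm with hZdef
  have Z_inner : ∀ h k, ⟪Z h, k⟫ = B h k := fun h k => Z0_inner h k
  -- key operator identity on partial sums
  have hSrec : ∀ n : ℕ, T ∘L S n ∘L adjoint V = S (n + 1) - A ∘L adjoint V := by
    intro n
    have e1 : S (n + 1)
        = (∑ j ∈ Finset.range (n + 1), (T ^ (j+1)) ∘L A ∘L ((adjoint V) ^ (j + 1 + 1)))
          + A ∘L adjoint V := by
      simp only [hS]
      rw [Finset.sum_range_succ' (fun j => (T ^ j) ∘L A ∘L ((adjoint V) ^ (j + 1))) (n+1)]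
      congr 1
    have e2 : T ∘L S n ∘L adjoint V
        = ∑ j ∈ Finset.range (n + 1), (T ^ (j+1)) ∘L A ∘L ((adjoint V) ^ (j + 1 + 1)) := by
      ext h
      simp only [hS, ContinuousLinearMap.comp_apply, ContinuousLinearMap.sum_apply, map_sum]
      refine Finset.sum_congr rfl fun j _ => ?_
      rw [pow_succ' T j, pow_succ (adjoint V) (j+1)]
      simp [ContinuousLinearMap.mul_apply]
    rw [e2, e1]; abel
  -- WOT identity
  have hWOT : ∀ (h : H) (k : K),
      ⟪(T ∘L Z ∘L adjoint V) h, k⟫ = ⟪(Z - A ∘L adjoint V) h, k⟫ := by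
    intro h k
    have lhs1 : ⟪(T ∘L Z ∘L adjoint V) h, k⟫ = ⟪Z (adjoint V h), adjoint T k⟫ := by
      simp only [ContinuousLinearMap.comp_apply]
      rw [ContinuousLinearMap.adjoint_inner_right]
    have lhs2 : φ (adjoint V h) (adjoint T k)
        = cshift (φ h k) - BoundedContinuousFunction.const ℕ (⟪(A ∘L adjoint V) h, k⟫ : ℂ) := by
      ext n
      have : φ (adjoint V h) (adjoint T k) n = ⟪S n (adjoint V h), adjoint T k⟫ := rfl
      rw [BoundedContinuousFunction.coe_sub, Pi.sub_apply, this,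
        ContinuousLinearMap.adjoint_inner_right]
      have : (T : K →L[ℂ] K) (S n (adjoint V h)) = (T ∘L S n ∘L adjoint V) h := rfl
      rw [this, hSrec n]
      simp only [ContinuousLinearMap.sub_apply, inner_sub_left, cshift_apply, φ_apply,
        BoundedContinuousFunction.const_apply, ContinuousLinearMap.comp_apply]
    rw [lhs1, Z_inner, hB]
    simp only []
    rw [lhs2, Lc_sub, Lc_cshift, Lc_const]
    have : Lc (φ h k) = ⟪Z h, k⟫ := (Z_inner h k).symm
    rw [this]
    simp [inner_sub_left]
  have hkey : T ∘L Z ∘L adjoint V = Z - A ∘L adjoint V := by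
    ext h
    exact ext_inner_right ℂ fun k => hWOT h k
  -- compose with V on the right
  have h2 : (T ∘L Z ∘L adjoint V) ∘L V = (Z - A ∘L adjoint V) ∘L V := by rw [hkey]
  have h3 : T ∘L Z = Z ∘L V - A := by
    have l1 : (T ∘L Z ∘L adjoint V) ∘L V = T ∘L Z := by
      rw [ContinuousLinearMap.comp_assoc, ContinuousLinearMap.comp_assoc, hV]
      simp [ContinuousLinearMap.one_def]
    have l2 : (Z - A ∘L adjoint V) ∘L V = Z ∘L V - A := by
      rw [ContinuousLinearMap.sub_comp, ContinuousLinearMap.comp_assoc, hV]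
      simp [ContinuousLinearMap.one_def]
    rw [l1, l2] at h2
    exact h2
  refine ⟨-Z, ?_⟩
  rw [ContinuousLinearMap.comp_neg, ContinuousLinearMap.neg_comp, h3]
  abel

lemma norm_V_apply (V : H →L[ℂ] H) (hV : adjoint V ∘L V = 1) (h : H) : ‖V h‖ = ‖h‖ := by
  have h1 : (inner ℂ (V h) (V h) : ℂ) = inner ℂ h h := by
    rw [← ContinuousLinearMap.adjoint_inner_left]
    have : adjoint V (V h) = (adjoint V ∘L V) h := rfl
    rw [this, hV]
    rfl
  have h2 : (‖V h‖ : ℝ) ^ 2 = ‖h‖ ^ 2 := by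
    have a1 := @inner_self_eq_norm_sq ℂ _ _ _ _ (V h)
    have a2 := @inner_self_eq_norm_sq ℂ _ _ _ _ h
    rw [← a1, ← a2, h1]
  calc ‖V h‖ = Real.sqrt (‖V h‖ ^ 2) := (Real.sqrt_sq (norm_nonneg _)).symm
    _ = Real.sqrt (‖h‖ ^ 2) := by rw [h2]
    _ = ‖h‖ := Real.sqrt_sq (norm_nonneg _)

lemma blockOp_diag_norm_le (T : K →L[ℂ] K) (hTc : ‖T‖ ≤ 1)
    (V : H →L[ℂ] H) (hV : adjoint V ∘L V = 1) :
    ‖blockOp T 0 V‖ ≤ 1 := by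
  refine opNorm_le_bound _ zero_le_one fun x => ?_
  have hx : ‖x‖ = Real.sqrt (‖x.fst‖ ^ 2 + ‖x.snd‖ ^ 2) := WithLp.prod_norm_eq_of_L2 x
  have hy : ‖blockOp T 0 V x‖
      = Real.sqrt (‖T x.fst + (0 : H →L[ℂ] K) x.snd‖ ^ 2 + ‖V x.snd‖ ^ 2) := by
    rw [WithLp.prod_norm_eq_of_L2]
    rfl
  rw [hy, hx]
  have hT1 : ‖T x.fst + (0 : H →L[ℂ] K) x.snd‖ ≤ ‖x.fst‖ := by
    simp only [ContinuousLinearMap.zero_apply, add_zero]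
    calc ‖T x.fst‖ ≤ ‖T‖ * ‖x.fst‖ := T.le_opNorm _
      _ ≤ 1 * ‖x.fst‖ := mul_le_mul_of_nonneg_right hTc (norm_nonneg _)
      _ = ‖x.fst‖ := one_mul _
  have hV1 : ‖V x.snd‖ = ‖x.snd‖ := norm_V_apply V hV x.snd
  rw [one_mul]
  apply Real.sqrt_le_sqrt
  have := sq_le_sq' (by linarith [norm_nonneg (T x.fst + (0 : H →L[ℂ] K) x.snd)] : -‖x.fst‖ ≤ ‖T x.fst + (0 : H →L[ℂ] K) x.snd‖) hT1
  rw [hV1]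
  nlinarith [norm_nonneg (T x.fst + (0 : H →L[ℂ] K) x.snd)]

lemma similar_of_sol (T : K →L[ℂ] K) (hTc : ‖T‖ ≤ 1)
    (V : H →L[ℂ] H) (hV : adjoint V ∘L V = 1)
    (X Zt : H →L[ℂ] K) (hsol : X = T ∘L Zt - Zt ∘L V) :
    SimilarToContraction (blockOp T X V) := by
  classical
  set e := WithLp.prodContinuousLinearEquiv 2 ℂ K H with he
  set U : (K × H) →L[ℂ] (K × H) := (fst ℂ K H - Zt ∘L snd ℂ K H).prod (snd ℂ K H) with hU
  set Ui : (K × H) →L[ℂ] (K × H) := (fst ℂ K H + Zt ∘L snd ℂ K H).prod (snd ℂ K H) with hUi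
  have hUUi : ∀ p : K × H, Ui (U p) = p := by
    intro p
    simp [hU, hUi, Prod.ext_iff]
  have hUiU : ∀ p : K × H, U (Ui p) = p := by
    intro p
    simp [hU, hUi, Prod.ext_iff]
  set f₁ : WithLp 2 (K × H) →L[ℂ] WithLp 2 (K × H) :=
    ((e.symm : K × H →L[ℂ] WithLp 2 (K × H)) ∘L U ∘L (e : WithLp 2 (K × H) →L[ℂ] K × H)) with hf1
  set f₂ : WithLp 2 (K × H) →L[ℂ] WithLp 2 (K × H) :=
    ((e.symm : K × H →L[ℂ] WithLp 2 (K × H)) ∘L Ui ∘L (e : WithLp 2 (K × H) →L[ℂ] K × H)) with hf2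
  have hinv1 : Function.LeftInverse f₂ f₁ := by
    intro x
    simp [hf1, hf2, hUUi]
  have hinv2 : Function.LeftInverse f₁ f₂ := by
    intro x
    simp [hf1, hf2, hUiU]
  refine ⟨ContinuousLinearEquiv.equivOfInverse f₁ f₂ hinv1 hinv2, ?_⟩
  have hcoe1 : ((ContinuousLinearEquiv.equivOfInverse f₁ f₂ hinv1 hinv2 : _ ≃L[ℂ] _) :
      WithLp 2 (K × H) →L[ℂ] WithLp 2 (K × H)) = f₁ := rfl
  have hcoe2 : (((ContinuousLinearEquiv.equivOfInverse f₁ f₂ hinv1 hinv2).symm) :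
      WithLp 2 (K × H) →L[ℂ] WithLp 2 (K × H)) = f₂ := rfl
  rw [hcoe1, hcoe2]
  have hconj : f₂ ∘L blockOp T X V ∘L f₁ = blockOp T 0 V := by
    ext x
    simp only [ContinuousLinearMap.comp_apply, hf1, hf2, blockOp,
      ContinuousLinearEquiv.coe_coe, ContinuousLinearEquiv.apply_symm_apply]
    apply congrArg
    simp only [ContinuousLinearMap.prod_apply, ContinuousLinearMap.comp_apply,
      ContinuousLinearMap.add_apply, ContinuousLinearMap.sub_apply, coe_fst', coe_snd',
      ContinuousLinearMap.zero_apply, hU, hUi]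
    have hX : X (e x).2 = T (Zt (e x).2) - Zt (V (e x).2) := by
      rw [hsol]; simp
    simp only [← he]
    rw [Prod.ext_iff]
    refine ⟨?_, rfl⟩
    simp only [ContinuousLinearEquiv.apply_symm_apply]
    rw [hX]
    simp only [map_sub]
    abel
  rw [hconj]
  exact blockOp_diag_norm_le T hTc V hV


end Stmt5Aux
end

/-- for `V` an isometry, `T` a right invertible contraction and `X = A + F`
with `sup_n ‖∑ T^j A V*^(j+1)‖ < ∞` and `F V = 0`, the equation `X = TZ - ZV` has
a bounded solution and `R(X) = [[T, X],[0, V]]` is similar to a contraction. -/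
theorem stmt5 (V : H →L[ℂ] H) (hV : adjoint V ∘L V = 1)
    (T : K →L[ℂ] K) (hTc : ‖T‖ ≤ 1) (hTr : ∃ R : K →L[ℂ] K, T ∘L R = 1)
    (X A F : H →L[ℂ] K) (hX : X = A + F)
    (hA : ∃ M : ℝ, ∀ n : ℕ,
      ‖∑ j ∈ Finset.range (n + 1), (T ^ j) ∘L A ∘L ((adjoint V) ^ (j + 1))‖ ≤ M)
    (hF : F ∘L V = 0) :
    (∃ Z : H →L[ℂ] K, X = T ∘L Z - Z ∘L V) ∧ SimilarToContraction (blockOp T X V) := by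
  obtain ⟨M, hM⟩ := hA
  obtain ⟨R, hR⟩ := hTr
  obtain ⟨W, hW⟩ := Stmt5Aux.exists_sol V hV T A M hM
  set Zt := W + R ∘L F with hZt
  have hRF : (R ∘L F) ∘L V = 0 := by
    rw [ContinuousLinearMap.comp_assoc, hF, ContinuousLinearMap.comp_zero]
  have hTRF : T ∘L (R ∘L F) = F := by
    rw [← ContinuousLinearMap.comp_assoc, hR, ContinuousLinearMap.one_def,
      ContinuousLinearMap.id_comp]
  have hsol : X = T ∘L Zt - Zt ∘L V := by
    rw [hX, ← hW, hZt, ContinuousLinearMap.comp_add, ContinuousLinearMap.add_comp, hTRF, hRF]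
    abel
  exact ⟨⟨Zt, hsol⟩, Stmt5Aux.similar_of_sol T hTc V hV X Zt hsol⟩
end

section
/- Let T be a coisometry on K, V a left invertible contraction on H, and X a bounded operator from H to K. If the equation X = TZ - ZV has a bounded solution Z, then X can be decomposed as X = A + F with A, F bounded, satisfying sup_n ||∑_{j=0}^{n} T*^{j+1} A V^{j}|| < ∞ and TF = 0. Specifically one may take F = -(I - T*T)ZV and A = TZ - T*TZV. -/
/-! With `Y = T Z` and `S = T*` we have `A = Y - S Y V`, so
`S^(j+1) A V^j = S^(j+1) Y V^j - S^(j+2) Y V^(j+1)` and the partial sums telescope to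
`S Y - S^(n+2) Y V^(n+1)`, which is bounded by `2 ‖T Z‖` because `T*` and `V` are contractions.
Finally `T F = 0` because `T (I - T* T) = T - (T T*) T = 0`. -/

open ContinuousLinearMap

variable {K H : Type*}
  [NormedAddCommGroup K] [InnerProductSpace ℂ K] [CompleteSpace K]
  [NormedAddCommGroup H] [InnerProductSpace ℂ H] [CompleteSpace H]

section Telescoping

variable {𝕜 E F : Type*} [NontriviallyNormedField 𝕜]
  [NormedAddCommGroup E] [NormedSpace 𝕜 E] [NormedAddCommGroup F] [NormedSpace 𝕜 F]

theorem ContinuousLinearMap.norm_pow_le_one {W : E →L[𝕜] E} (hW : ‖W‖ ≤ 1) :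
    ∀ k : ℕ, ‖W ^ k‖ ≤ 1
  | 0 => norm_id_le
  | k + 1 => calc ‖W ^ (k + 1)‖ ≤ ‖W ^ k‖ * ‖W‖ := by rw [pow_succ]; exact norm_mul_le _ _
      _ ≤ 1 := mul_le_one₀ (norm_pow_le_one hW k) (norm_nonneg _) hW

theorem ContinuousLinearMap.sum_range_pow_comp_sub_comp_comp_pow
    (S : F →L[𝕜] F) (Y : E →L[𝕜] F) (V : E →L[𝕜] E) (n : ℕ) :
    ∑ j ∈ Finset.range n, (S ^ (j + 1)) ∘L (Y - S ∘L Y ∘L V) ∘L (V ^ j) =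
      S ∘L Y - (S ^ (n + 1)) ∘L Y ∘L (V ^ n) := by
  have hterm : ∀ j, (S ^ (j + 1)) ∘L (Y - S ∘L Y ∘L V) ∘L (V ^ j) =
      (S ^ (j + 1)) ∘L Y ∘L (V ^ j) - (S ^ (j + 2)) ∘L Y ∘L (V ^ (j + 1)) := by
    intro j
    simp only [sub_comp, comp_sub, pow_succ S (j + 1), pow_succ' V j, mul_def, comp_assoc]
  rw [Finset.sum_congr rfl fun j _ => hterm j,
    Finset.sum_range_sub' (fun j => (S ^ (j + 1)) ∘L Y ∘L (V ^ j))]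
  simp only [zero_add, pow_one, pow_zero, one_def, comp_id]

theorem ContinuousLinearMap.norm_sum_range_pow_comp_sub_comp_comp_pow_le
    {S : F →L[𝕜] F} {V : E →L[𝕜] E} (hS : ‖S‖ ≤ 1) (hV : ‖V‖ ≤ 1) (Y : E →L[𝕜] F) (n : ℕ) :
    ‖∑ j ∈ Finset.range n, (S ^ (j + 1)) ∘L (Y - S ∘L Y ∘L V) ∘L (V ^ j)‖ ≤ 2 * ‖Y‖ := by
  have hfirst : ‖S ∘L Y‖ ≤ ‖Y‖ :=
    (opNorm_comp_le _ _).trans (mul_le_of_le_one_left (norm_nonneg _) hS)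
  have hlast : ‖(S ^ (n + 1)) ∘L Y ∘L (V ^ n)‖ ≤ ‖Y‖ :=
    calc ‖(S ^ (n + 1)) ∘L Y ∘L (V ^ n)‖ ≤ ‖S ^ (n + 1)‖ * (‖Y‖ * ‖V ^ n‖) :=
          (opNorm_comp_le _ _).trans (by gcongr; exact opNorm_comp_le _ _)
      _ ≤ 1 * (‖Y‖ * 1) := by gcongr <;> exact norm_pow_le_one ‹_› _
      _ = ‖Y‖ := by ring
  rw [sum_range_pow_comp_sub_comp_comp_pow, two_mul]
  exact (norm_sub_le _ _).trans (add_le_add hfirst hlast)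

end Telescoping

section Coisometry

variable {𝕜 E : Type*} [RCLike 𝕜] [NormedAddCommGroup E] [InnerProductSpace 𝕜 E] [CompleteSpace E]

theorem ContinuousLinearMap.norm_adjoint_le_one_of_comp_adjoint_eq_one {T : E →L[𝕜] E}
    (hT : T ∘L adjoint T = 1) : ‖adjoint T‖ ≤ 1 := by
  have h := norm_adjoint_comp_self (adjoint T)
  rw [adjoint_adjoint, hT] at h
  have h1 : ‖(1 : E →L[𝕜] E)‖ ≤ 1 := norm_id_le
  nlinarith [norm_nonneg (adjoint T)]

theorem ContinuousLinearMap.comp_one_sub_adjoint_comp_self {T : E →L[𝕜] E}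
    (hT : T ∘L adjoint T = 1) : T ∘L (1 - adjoint T ∘L T) = 0 := by
  rw [comp_sub, ← comp_assoc, hT]
  simp only [one_def, comp_id, id_comp, sub_self]

end Coisometry

theorem stmt6_general (T : K →L[ℂ] K) (hT : T ∘L adjoint T = 1)
    (V : H →L[ℂ] H) (hVc : ‖V‖ ≤ 1)
    (X Z : H →L[ℂ] K) (hZ : X = T ∘L Z - Z ∘L V) :
    ∃ A F : H →L[ℂ] K, X = A + F ∧
      (∃ M : ℝ, ∀ n : ℕ,
        ‖∑ j ∈ Finset.range (n + 1), ((adjoint T) ^ (j + 1)) ∘L A ∘L (V ^ j)‖ ≤ M) ∧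
      T ∘L F = 0 ∧
      F = -((1 - adjoint T ∘L T) ∘L Z ∘L V) ∧
      A = T ∘L Z - adjoint T ∘L T ∘L Z ∘L V := by
  refine ⟨T ∘L Z - adjoint T ∘L T ∘L Z ∘L V, -((1 - adjoint T ∘L T) ∘L Z ∘L V),
    ?_, ?_, ?_, rfl, rfl⟩
  · rw [hZ, sub_comp, one_def, id_comp, comp_assoc]
    abel
  · refine ⟨2 * ‖T ∘L Z‖, fun n => ?_⟩
    simpa only [comp_assoc] using norm_sum_range_pow_comp_sub_comp_comp_pow_le
      (norm_adjoint_le_one_of_comp_adjoint_eq_one hT) hVc (T ∘L Z) (n + 1)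
  · rw [comp_neg, ← comp_assoc, comp_one_sub_adjoint_comp_self hT, zero_comp, neg_zero]

/-- for `T` a coisometry, `V` a left invertible contraction and `Z` a bounded
solution of `X = TZ - ZV`, the operator `X` decomposes as `X = A + F` with
`sup_n ‖∑ T*^(j+1) A V^j‖ < ∞` and `T F = 0`; one may take `F = -(I - T*T) Z V`
and `A = TZ - T*T Z V`. -/
theorem stmt6 (T : K →L[ℂ] K) (hT : T ∘L adjoint T = 1)
    (V : H →L[ℂ] H) (hVc : ‖V‖ ≤ 1) (hVl : ∃ L : H →L[ℂ] H, L ∘L V = 1)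
    (X Z : H →L[ℂ] K) (hZ : X = T ∘L Z - Z ∘L V) :
    ∃ A F : H →L[ℂ] K, X = A + F ∧
      (∃ M : ℝ, ∀ n : ℕ,
        ‖∑ j ∈ Finset.range (n + 1), ((adjoint T) ^ (j + 1)) ∘L A ∘L (V ^ j)‖ ≤ M) ∧
      T ∘L F = 0 ∧
      F = -((1 - adjoint T ∘L T) ∘L Z ∘L V) ∧
      A = T ∘L Z - adjoint T ∘L T ∘L Z ∘L V :=
  stmt6_general T hT V hVc X Z hZ
end

section
/- Let V be a pure isometry (unilateral shift) on H and X a bounded operator on H such that sup_n ||∑_{j=0}^{n} (V^{j+1} X V^{j} - V*^{j} X V*^{j+1})|| < ∞. Then the commutator equation X = V*Z - ZV has a bounded solution Z on H. -/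
open ContinuousLinearMap Filter Topology

local notation "⟪" x ", " y "⟫" => @inner ℂ _ _ x y

lemma ultra_lim_exists' (U : Ultrafilter ℕ) (f : ℕ → ℂ) (C : ℝ) (hf : ∀ n, ‖f n‖ ≤ C) :
    ∃ c, Tendsto f (U : Filter ℕ) (𝓝 c) := by
  have hs : IsCompact (Metric.closedBall (0:ℂ) C) := isCompact_closedBall _ _
  have hmem : ∀ n, f n ∈ Metric.closedBall (0:ℂ) C := by
    intro n; simpa [Metric.mem_closedBall, dist_zero_right] using hf n
  obtain ⟨c, -, hc⟩ := hs.ultrafilter_le_nhds (U.map f) (by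
    rw [Ultrafilter.coe_map]
    exact le_principal_iff.2 (mem_map.2 (univ_mem' hmem)))
  exact ⟨c, by rwa [Ultrafilter.coe_map] at hc⟩


/-- if `V` is a pure isometry (a unilateral shift, i.e. `V*^n → 0` strongly)
and `sup_n ‖∑_{j=0}^n (V^(j+1) X V^j - V*^j X V*^(j+1))‖ < ∞`, then the commutator
equation `X = V* Z - Z V` has a bounded solution `Z`. -/
theorem stmt7 {H : Type*} [NormedAddCommGroup H] [InnerProductSpace ℂ H] [CompleteSpace H]
    (V : H →L[ℂ] H) (hV : adjoint V ∘L V = 1)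
    (hVpure : ∀ x : H, Tendsto (fun n : ℕ => ((adjoint V) ^ n) x) atTop (𝓝 0))
    (X : H →L[ℂ] H)
    (hX : ∃ M : ℝ, ∀ n : ℕ,
      ‖∑ j ∈ Finset.range (n + 1),
        ((V ^ (j + 1)) ∘L X ∘L (V ^ j) - ((adjoint V) ^ j) ∘L X ∘L ((adjoint V) ^ (j + 1)))‖
          ≤ M) :
    ∃ Z : H →L[ℂ] H, X = adjoint V ∘L Z - Z ∘L V := by
  obtain ⟨M, hM⟩ := hX
  set W : H →L[ℂ] H := adjoint V with hW
  have hV' : W * V = 1 := hV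
  -- isometry facts
  have hiso : ∀ x : H, ‖V x‖ = ‖x‖ := by
    intro x
    have h1 : ⟪V x, V x⟫ = ⟪x, x⟫ := by
      rw [← adjoint_inner_left]
      change ⟪(adjoint V ∘L V) x, x⟫ = _
      rw [hV]; rfl
    have h2 : ‖V x‖ ^ 2 = ‖x‖ ^ 2 := by
      rw [← inner_self_eq_norm_sq (𝕜 := ℂ), ← inner_self_eq_norm_sq (𝕜 := ℂ), h1]
    nlinarith [norm_nonneg (V x), norm_nonneg x]
  have hisoPow : ∀ (m : ℕ) (x : H), ‖(V ^ m) x‖ = ‖x‖ := by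
    intro m
    induction m with
    | zero => intro x; simp
    | succ m ih =>
      intro x
      have : (V ^ (m+1)) x = (V ^ m) (V x) := by
        rw [pow_succ]; rfl
      rw [this, ih, hiso]
  -- the partial sums
  set S : ℕ → H →L[ℂ] H := fun n => ∑ j ∈ Finset.range (n + 1),
      ((V ^ (j + 1)) ∘L X ∘L (V ^ j) - ((adjoint V) ^ j) ∘L X ∘L ((adjoint V) ^ (j + 1)))
    with hS
  -- ultrafilter
  set U : Ultrafilter ℕ := Ultrafilter.of atTop with hUdef
  have hU : (U : Filter ℕ) ≤ atTop := Ultrafilter.of_le _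
  -- the limit sesquilinear form
  set φ : H → H → ℂ := fun h k => limUnder (U : Filter ℕ) (fun n => ⟪S n h, k⟫) with hφdef
  have hbound : ∀ h k : H, ∀ n : ℕ, ‖(⟪S n h, k⟫ : ℂ)‖ ≤ M * ‖h‖ * ‖k‖ := by
    intro h k n
    calc ‖(⟪S n h, k⟫ : ℂ)‖ ≤ ‖S n h‖ * ‖k‖ := norm_inner_le_norm _ _
      _ ≤ (‖S n‖ * ‖h‖) * ‖k‖ :=
        mul_le_mul_of_nonneg_right ((S n).le_opNorm h) (norm_nonneg k)
      _ ≤ (M * ‖h‖) * ‖k‖ := by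
        have := hM n
        gcongr
      _ = M * ‖h‖ * ‖k‖ := by ring
  have hφ : ∀ h k : H, Tendsto (fun n => (⟪S n h, k⟫ : ℂ)) (U : Filter ℕ) (𝓝 (φ h k)) :=
    fun h k => tendsto_nhds_limUnder (ultra_lim_exists' U _ _ (hbound h k))
  have hMnn : 0 ≤ M := (norm_nonneg _).trans (hM 0)
  -- linear functional in k
  have ψmk : ∀ h : H, ∃ ψ : H →L[ℂ] ℂ, (∀ k, ψ k = φ h k) ∧ ‖ψ‖ ≤ M * ‖h‖ := by
    intro h
    refine ⟨LinearMap.mkContinuous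
      { toFun := fun k => φ h k
        map_add' := by
          intro k₁ k₂
          refine tendsto_nhds_unique (hφ h (k₁ + k₂)) ?_
          have := (hφ h k₁).add (hφ h k₂)
          simpa [inner_add_right] using this
        map_smul' := by
          intro c k
          refine tendsto_nhds_unique (hφ h (c • k)) ?_
          have := (hφ h k).const_mul c
          simpa [inner_smul_right] using this }
      (M * ‖h‖) ?_, fun k => rfl, ?_⟩
    · intro k
      exact le_of_tendsto' (hφ h k).norm fun n => by
        simpa [mul_assoc] using hbound h k n
    · exact LinearMap.mkContinuous_norm_le _ (by positivity) _
  choose ψ hψ hψnorm using ψmk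
  set z : H → H := fun h => (InnerProductSpace.toDual ℂ H).symm (ψ h) with hz
  have hzinner : ∀ h k : H, ⟪z h, k⟫ = φ h k := by
    intro h k
    rw [hz]
    simp only [InnerProductSpace.toDual_symm_apply]
    exact hψ h k
  have hznorm : ∀ h : H, ‖z h‖ ≤ M * ‖h‖ := by
    intro h
    rw [hz]
    simpa using hψnorm h
  -- linearity of z
  have hzadd : ∀ h₁ h₂ : H, z (h₁ + h₂) = z h₁ + z h₂ := by
    intro h₁ h₂
    refine ext_inner_right ℂ fun k => ?_
    rw [hzinner, inner_add_left, hzinner, hzinner]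
    refine tendsto_nhds_unique (hφ (h₁ + h₂) k) ?_
    have := (hφ h₁ k).add (hφ h₂ k)
    simpa [inner_add_left] using this
  have hzsmul : ∀ (c : ℂ) (h : H), z (c • h) = c • z h := by
    intro c h
    refine ext_inner_right ℂ fun k => ?_
    rw [hzinner, inner_smul_left, hzinner]
    refine tendsto_nhds_unique (hφ (c • h) k) ?_
    have := (hφ h k).const_mul (starRingEnd ℂ c)
    simpa [inner_smul_left, mul_comm] using this
  set Z₀ : H →L[ℂ] H := LinearMap.mkContinuous
    { toFun := z, map_add' := hzadd, map_smul' := hzsmul } M hznorm with hZ₀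
  have hZ₀app : ∀ h, Z₀ h = z h := fun h => rfl
  -- key operator identity
  have hWV1 : ∀ j : ℕ, W * V ^ (j + 1) = V ^ j := by
    intro j; rw [pow_succ', ← mul_assoc, hV', one_mul]
  have hWV2 : ∀ j : ℕ, W ^ (j + 1) * V = W ^ j := by
    intro j; rw [pow_succ, mul_assoc, hV', mul_one]
  have key : ∀ n : ℕ, W * S n - S n * V =
      (2 : ℂ) • X - (V ^ (n+1) * X * V ^ (n+1)) - (W ^ (n+1) * X * W ^ (n+1)) := by
    intro n
    have hterm : ∀ j : ℕ,
        W * ((V ^ (j + 1)) ∘L X ∘L (V ^ j) - (W ^ j) ∘L X ∘L (W ^ (j + 1)))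
          - ((V ^ (j + 1)) ∘L X ∘L (V ^ j) - (W ^ j) ∘L X ∘L (W ^ (j + 1))) * V
        = (V ^ j * X * V ^ j + W ^ j * X * W ^ j)
          - (V ^ (j+1) * X * V ^ (j+1) + W ^ (j+1) * X * W ^ (j+1)) := by
      intro j
      have e1 : W * ((V ^ (j + 1)) ∘L X ∘L (V ^ j)) = V ^ j * X * V ^ j := by
        rw [← mul_def, ← mul_def, ← mul_assoc, ← mul_assoc, hWV1]
      have e2 : W * ((W ^ j) ∘L X ∘L (W ^ (j + 1))) = W ^ (j+1) * X * W ^ (j+1) := by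
        rw [← mul_def, ← mul_def, ← mul_assoc, ← mul_assoc, ← pow_succ']
      have e3 : ((V ^ (j + 1)) ∘L X ∘L (V ^ j)) * V = V ^ (j+1) * X * V ^ (j+1) := by
        rw [← mul_def, ← mul_def, mul_assoc, mul_assoc, ← pow_succ, ← mul_assoc]
      have e4 : ((W ^ j) ∘L X ∘L (W ^ (j + 1))) * V = W ^ j * X * W ^ j := by
        rw [← mul_def, ← mul_def, mul_assoc, mul_assoc, hWV2, ← mul_assoc]
      rw [mul_sub, sub_mul, e1, e2, e3, e4]
      abel
    have : W * S n - S n * V = ∑ j ∈ Finset.range (n + 1),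
        ((V ^ j * X * V ^ j + W ^ j * X * W ^ j)
          - (V ^ (j+1) * X * V ^ (j+1) + W ^ (j+1) * X * W ^ (j+1))) := by
      rw [hS]
      rw [Finset.mul_sum, Finset.sum_mul, ← Finset.sum_sub_distrib]
      exact Finset.sum_congr rfl fun j _ => hterm j
    rw [this, Finset.sum_range_sub' (fun j => V ^ j * X * V ^ j + W ^ j * X * W ^ j)]
    simp only [pow_zero, one_mul, mul_one]
    rw [two_smul]
    abel
  -- error terms tend to zero
  have herr : ∀ h k : H, Tendsto (fun n : ℕ =>
      (⟪(V ^ (n+1) * X * V ^ (n+1)) h, k⟫ : ℂ) + ⟪(W ^ (n+1) * X * W ^ (n+1)) h, k⟫)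
      atTop (𝓝 0) := by
    intro h k
    have hadj : ∀ m : ℕ, adjoint (V ^ m) = W ^ m := by
      intro m
      rw [hW, ← star_eq_adjoint, ← star_eq_adjoint, star_pow]
    have t1 : Tendsto (fun n : ℕ => (⟪(V ^ (n+1) * X * V ^ (n+1)) h, k⟫ : ℂ)) atTop (𝓝 0) := by
      rw [tendsto_zero_iff_norm_tendsto_zero]
      have hb : ∀ n : ℕ, ‖(⟪(V ^ (n+1) * X * V ^ (n+1)) h, k⟫ : ℂ)‖
          ≤ ‖X‖ * ‖h‖ * ‖(W ^ (n+1)) k‖ := by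
        intro n
        have : (⟪(V ^ (n+1) * X * V ^ (n+1)) h, k⟫ : ℂ)
            = ⟪X ((V ^ (n+1)) h), (W ^ (n+1)) k⟫ := by
          show (⟪(V ^ (n+1)) (X ((V ^ (n+1)) h)), k⟫ : ℂ) = _
          rw [← hadj (n+1), ← adjoint_inner_right]
        rw [this]
        calc ‖(⟪X ((V ^ (n+1)) h), (W ^ (n+1)) k⟫ : ℂ)‖
            ≤ ‖X ((V ^ (n+1)) h)‖ * ‖(W ^ (n+1)) k‖ := norm_inner_le_norm _ _
          _ ≤ (‖X‖ * ‖h‖) * ‖(W ^ (n+1)) k‖ := by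
              gcongr
              calc ‖X ((V ^ (n+1)) h)‖ ≤ ‖X‖ * ‖(V ^ (n+1)) h‖ := X.le_opNorm _
                _ = ‖X‖ * ‖h‖ := by rw [hisoPow]
      have hWk : Tendsto (fun n : ℕ => ‖(W ^ (n+1)) k‖) atTop (𝓝 0) := by
        have := ((hVpure k).comp (tendsto_add_atTop_nat 1)).norm
        simpa using this
      have := hWk.const_mul (‖X‖ * ‖h‖)
      rw [mul_zero] at this
      exact squeeze_zero (fun n => norm_nonneg _) hb this
    have t2 : Tendsto (fun n : ℕ => (⟪(W ^ (n+1) * X * W ^ (n+1)) h, k⟫ : ℂ)) atTop (𝓝 0) := by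
      rw [tendsto_zero_iff_norm_tendsto_zero]
      have hb : ∀ n : ℕ, ‖(⟪(W ^ (n+1) * X * W ^ (n+1)) h, k⟫ : ℂ)‖
          ≤ ‖X‖ * ‖k‖ * ‖(W ^ (n+1)) h‖ := by
        intro n
        have : (⟪(W ^ (n+1) * X * W ^ (n+1)) h, k⟫ : ℂ)
            = ⟪X ((W ^ (n+1)) h), (V ^ (n+1)) k⟫ := by
          show (⟪(W ^ (n+1)) (X ((W ^ (n+1)) h)), k⟫ : ℂ) = _
          rw [← hadj (n+1), adjoint_inner_left]
        rw [this]
        calc ‖(⟪X ((W ^ (n+1)) h), (V ^ (n+1)) k⟫ : ℂ)‖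
            ≤ ‖X ((W ^ (n+1)) h)‖ * ‖(V ^ (n+1)) k‖ := norm_inner_le_norm _ _
          _ ≤ (‖X‖ * ‖(W ^ (n+1)) h‖) * ‖k‖ := by
              rw [hisoPow]
              gcongr
              exact X.le_opNorm _
          _ = ‖X‖ * ‖k‖ * ‖(W ^ (n+1)) h‖ := by ring
      have hWh : Tendsto (fun n : ℕ => ‖(W ^ (n+1)) h‖) atTop (𝓝 0) := by
        have := ((hVpure h).comp (tendsto_add_atTop_nat 1)).norm
        simpa using this
      have := hWh.const_mul (‖X‖ * ‖k‖)
      rw [mul_zero] at this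
      exact squeeze_zero (fun n => norm_nonneg _) hb this
    simpa using t1.add t2
  -- main identity for φ
  have hmain : ∀ h k : H, φ h (V k) - φ (V h) k = 2 * ⟪X h, k⟫ := by
    intro h k
    have lim1 : Tendsto (fun n => (⟪S n h, V k⟫ : ℂ) - ⟪S n (V h), k⟫) (U : Filter ℕ)
        (𝓝 (φ h (V k) - φ (V h) k)) := (hφ h (V k)).sub (hφ (V h) k)
    have eqfun : ∀ n : ℕ, (⟪S n h, V k⟫ : ℂ) - ⟪S n (V h), k⟫
        = 2 * ⟪X h, k⟫ - ((⟪(V ^ (n+1) * X * V ^ (n+1)) h, k⟫ : ℂ)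
            + ⟪(W ^ (n+1) * X * W ^ (n+1)) h, k⟫) := by
      intro n
      have h1 : (⟪S n h, V k⟫ : ℂ) = ⟪(W * S n) h, k⟫ := by
        show _ = (⟪W (S n h), k⟫ : ℂ)
        rw [hW, adjoint_inner_left]
      have h2 : (⟪S n (V h), k⟫ : ℂ) = ⟪(S n * V) h, k⟫ := rfl
      rw [h1, h2, ← inner_sub_left]
      have : (W * S n) h - (S n * V) h = (W * S n - S n * V) h := rfl
      rw [this, key n]
      simp only [sub_apply, smul_apply, inner_sub_left, inner_smul_left]
      simp only [map_ofNat]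
      ring
    have lim2 : Tendsto (fun n => (⟪S n h, V k⟫ : ℂ) - ⟪S n (V h), k⟫) (U : Filter ℕ)
        (𝓝 (2 * ⟪X h, k⟫)) := by
      have : Tendsto (fun n : ℕ => 2 * (⟪X h, k⟫ : ℂ)
          - ((⟪(V ^ (n+1) * X * V ^ (n+1)) h, k⟫ : ℂ)
            + ⟪(W ^ (n+1) * X * W ^ (n+1)) h, k⟫)) atTop (𝓝 (2 * ⟪X h, k⟫)) := by
        have := (herr h k).const_sub (2 * (⟪X h, k⟫ : ℂ))
        simpa using this
      have := this.mono_left hU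
      simpa only [← eqfun] using this
    exact tendsto_nhds_unique lim1 lim2
  -- conclude
  refine ⟨(2⁻¹ : ℂ) • Z₀, ?_⟩
  ext h
  refine ext_inner_right ℂ fun k => ?_
  have hrhs : ((adjoint V ∘L ((2⁻¹ : ℂ) • Z₀) - ((2⁻¹ : ℂ) • Z₀) ∘L V) h : H)
      = (2⁻¹ : ℂ) • (W (Z₀ h) - Z₀ (V h)) := by
    simp [smul_sub]
    rfl
  rw [hrhs, inner_smul_left, inner_sub_left]
  have hA : (⟪W (Z₀ h), k⟫ : ℂ) = φ h (V k) := by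
    rw [hW, adjoint_inner_left, hZ₀app, hzinner]
  have hB : (⟪Z₀ (V h), k⟫ : ℂ) = φ (V h) k := by
    rw [hZ₀app, hzinner]
  rw [hA, hB, hmain h k]
  rw [map_inv₀, map_ofNat]
  ring
end
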